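/- arXiv:2507.01534 — 8 statements merged into one kernel-verified Lean document; each statement's English description precedes it below -/
import Mathlib

section
/- Let V be a finite-dimensional complex inner product space and let ξ be a self-adjoint endomorphism of V. Then for every endomorphism b of V and every real number t, the Hilbert–Schmidt norm satisfies ‖exp(tξ) ∘ b ∘ exp(−tξ)‖² = Σ_{(λ,μ)} e^{2t(λ−μ)} · ‖P_λ ∘ b ∘ P_μ‖², where the (finite) sum ranges over all ordered pairs (λ, μ) of eigenvalues of ξ. -/
open scoped Topology ComplexConjugate InnerProductSpace

variable {V : Type*} [NormedAddCommGroup V] [InnerProductSpace ℂ V] [FiniteDimensional ℂ V]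

/-- The Hilbert–Schmidt norm `‖b‖ = √(tr (b ∘ b*))` on endomorphisms of a
finite-dimensional complex inner product space. -/
noncomputable def hsNorm (b : V →L[ℂ] V) : ℝ :=
  Real.sqrt (LinearMap.trace ℂ V
    ((b ∘L ContinuousLinearMap.adjoint b : V →L[ℂ] V) : V →ₗ[ℂ] V)).re

/-- The orthogonal projection onto the eigenspace `ker (ξ - λ·id)`, regarded as an
endomorphism of `V`. -/
noncomputable def eigProj (ξ : V →L[ℂ] V) (lam : ℝ) : V →L[ℂ] V :=
  (Module.End.eigenspace (ξ : V →ₗ[ℂ] V) (lam : ℂ)).subtypeL ∘L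
    Submodule.orthogonalProjectionOnto (Module.End.eigenspace (ξ : V →ₗ[ℂ] V) (lam : ℂ))

lemma exp_apply_eigen (A : V →L[ℂ] V) (c : ℂ) (x : V) (h : A x = c • x) :
    NormedSpace.exp A x = Complex.exp c • x := by
  have hpow : ∀ n : ℕ, (A ^ n) x = c ^ n • x := by
    intro n; induction n with
    | zero => simp
    | succ n ih =>
      rw [pow_succ, pow_succ, ContinuousLinearMap.mul_apply, h, map_smul, ih, smul_smul,
        mul_comm]
  have hsum : Summable fun n : ℕ => ((n.factorial : ℂ))⁻¹ • A ^ n :=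
    NormedSpace.expSeries_summable' (𝕂 := ℂ) A
  rw [NormedSpace.exp_eq_tsum ℂ]
  have := ((ContinuousLinearMap.apply ℂ V x).map_tsum hsum)
  simp only [ContinuousLinearMap.apply_apply] at this
  rw [this]
  simp only [ContinuousLinearMap.smul_apply, hpow, smul_smul]
  rw [Summable.tsum_smul_const]
  · congr 1
    rw [Complex.exp_eq_exp_ℂ, NormedSpace.exp_eq_tsum ℂ]
    simp [smul_eq_mul]
  · simpa [smul_eq_mul] using NormedSpace.expSeries_summable' (𝕂 := ℂ) c

lemma trace_re_eq {ι : Type*} [Fintype ι] [DecidableEq ι] (e : OrthonormalBasis ι ℂ V)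
    (c : V →L[ℂ] V) :
    (LinearMap.trace ℂ V
      ((c ∘L ContinuousLinearMap.adjoint c : V →L[ℂ] V) : V →ₗ[ℂ] V)).re
      = ∑ i, ∑ j, ‖⟪e i, c (e j)⟫_ℂ‖ ^ 2 := by
  rw [LinearMap.trace_eq_matrix_trace ℂ e.toBasis, Matrix.trace]
  have hdiag : ∀ i, (LinearMap.toMatrix e.toBasis e.toBasis
      ((c ∘L ContinuousLinearMap.adjoint c : V →L[ℂ] V) : V →ₗ[ℂ] V)).diag i
      = ⟪e i, c (ContinuousLinearMap.adjoint c (e i))⟫_ℂ := by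
    intro i
    rw [Matrix.diag, LinearMap.toMatrix_apply, e.coe_toBasis, e.coe_toBasis_repr_apply,
      e.repr_apply_apply]
    simp
  simp_rw [hdiag]
  rw [Complex.re_sum]
  refine Finset.sum_congr rfl fun i _ => ?_
  have h1 : ⟪e i, c (ContinuousLinearMap.adjoint c (e i))⟫_ℂ
      = ⟪ContinuousLinearMap.adjoint c (e i), ContinuousLinearMap.adjoint c (e i)⟫_ℂ :=
    (ContinuousLinearMap.adjoint_inner_left c _ _).symm
  rw [h1]
  have h2 : (⟪ContinuousLinearMap.adjoint c (e i), ContinuousLinearMap.adjoint c (e i)⟫_ℂ).re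
      = ‖ContinuousLinearMap.adjoint c (e i)‖ ^ 2 := by
    exact inner_self_eq_norm_sq (𝕜 := ℂ) _
  rw [h2]
  set y := ContinuousLinearMap.adjoint c (e i) with hy
  have h3 : ‖y‖ ^ 2 = ∑ j, ‖⟪e j, y⟫_ℂ‖ ^ 2 := by
    rw [← e.repr.norm_map y, EuclideanSpace.norm_eq, Real.sq_sqrt (by positivity)]
    simp_rw [e.repr_apply_apply]
  rw [h3]
  refine Finset.sum_congr rfl fun j _ => ?_
  rw [hy, ContinuousLinearMap.adjoint_inner_right, norm_inner_symm]

lemma hsNorm_sq {ι : Type*} [Fintype ι] [DecidableEq ι] (e : OrthonormalBasis ι ℂ V)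
    (c : V →L[ℂ] V) : hsNorm c ^ 2 = ∑ i, ∑ j, ‖⟪e i, c (e j)⟫_ℂ‖ ^ 2 := by
  rw [hsNorm, Real.sq_sqrt, trace_re_eq e c]
  rw [trace_re_eq e c]
  positivity

theorem hsNorm_sq_exp_conj_eq_sum (ξ : V →L[ℂ] V) (hξ : IsSelfAdjoint ξ)
    (S : Finset ℝ)
    (hS : ∀ lam : ℝ, lam ∈ S ↔ Module.End.HasEigenvalue (ξ : V →ₗ[ℂ] V) (lam : ℂ))
    (b : V →L[ℂ] V) (t : ℝ) :
    hsNorm (NormedSpace.exp (t • ξ) ∘L b ∘L NormedSpace.exp (-(t • ξ))) ^ 2 =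
      ∑ lam ∈ S, ∑ mu ∈ S, Real.exp (2 * t * (lam - mu)) *
        hsNorm (eigProj ξ lam ∘L b ∘L eigProj ξ mu) ^ 2 := by
  classical
  have hsym : (ξ : V →ₗ[ℂ] V).IsSymmetric := hξ.isSymmetric
  have hn : Module.finrank ℂ V = Module.finrank ℂ V := rfl
  set e := hsym.eigenvectorBasis hn with he_def
  set μ := hsym.eigenvalues hn with hμ_def
  have heig : ∀ i, ξ (e i) = (μ i : ℂ) • e i := fun i => hsym.apply_eigenvectorBasis hn i
  have hμS : ∀ i, μ i ∈ S := fun i => (hS _).mpr (hsym.hasEigenvalue_eigenvalues hn i)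
  have hmem : ∀ i, e i ∈ Module.End.eigenspace (ξ : V →ₗ[ℂ] V) ((μ i : ℝ) : ℂ) :=
    fun i => (hsym.hasEigenvector_eigenvectorBasis hn i).1
  -- projections act on basis vectors
  have hproj : ∀ (lam : ℝ) i, eigProj ξ lam (e i) = if μ i = lam then e i else 0 := by
    intro lam i
    by_cases h : μ i = lam
    · rw [if_pos h]
      have hm : e i ∈ Module.End.eigenspace (ξ : V →ₗ[ℂ] V) ((lam : ℝ) : ℂ) := h ▸ hmem i
      show ((Submodule.orthogonalProjectionOnto _ (e i) : _) : V) = e i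
      exact Submodule.starProjection_eq_self_iff.mpr hm
    · rw [if_neg h]
      have horth : e i ∈ (Module.End.eigenspace (ξ : V →ₗ[ℂ] V) ((lam : ℝ) : ℂ))ᗮ := by
        rw [Submodule.mem_orthogonal]
        intro u hu
        have hne : ((lam : ℝ) : ℂ) ≠ ((μ i : ℝ) : ℂ) := by
          simp only [ne_eq, Complex.ofReal_inj]
          exact fun hc => h hc.symm
        exact hsym.orthogonalFamily_eigenspaces hne ⟨u, hu⟩ ⟨e i, hmem i⟩
      show ((Submodule.orthogonalProjectionOnto _ (e i) : _) : V) = 0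
      rw [Submodule.orthogonalProjectionOnto_apply_of_mem_orthogonal horth]
      rfl
  -- self-adjointness of projections
  have hsaP : ∀ lam : ℝ, IsSelfAdjoint (eigProj ξ lam) := fun lam =>
    isSelfAdjoint_starProjection _
  -- entries of P b P
  have hPentry : ∀ (lam mu : ℝ) i j,
      ‖⟪e i, (eigProj ξ lam ∘L b ∘L eigProj ξ mu) (e j)⟫_ℂ‖ ^ 2
        = if μ i = lam ∧ μ j = mu then ‖⟪e i, b (e j)⟫_ℂ‖ ^ 2 else 0 := by
    intro lam mu i j
    simp only [ContinuousLinearMap.comp_apply]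
    rw [hproj mu j]
    by_cases hj : μ j = mu
    · rw [if_pos hj]
      have h4 : ⟪e i, eigProj ξ lam (b (e j))⟫_ℂ = ⟪eigProj ξ lam (e i), b (e j)⟫_ℂ := by
        rw [← ContinuousLinearMap.adjoint_inner_left, (hsaP lam).adjoint_eq]
      rw [h4, hproj lam i]
      by_cases hi : μ i = lam
      · rw [if_pos hi, if_pos ⟨hi, hj⟩]
      · rw [if_neg hi, if_neg (fun hc => hi hc.1)]
        simp
    · rw [if_neg hj, if_neg (fun hc => hj hc.2)]
      simp
  -- eigen-action of the exponentials
  have hsmul : ∀ (s : ℝ) i, (s • ξ) (e i) = ((s * μ i : ℝ) : ℂ) • e i := by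
    intro s i
    rw [ContinuousLinearMap.smul_apply, heig i, Complex.ofReal_mul, mul_smul]
    congr 1
  have hA : ∀ i, NormedSpace.exp (t • ξ) (e i)
      = Complex.exp ((t * μ i : ℝ) : ℂ) • e i := fun i =>
    exp_apply_eigen _ _ _ (hsmul t i)
  have hB : ∀ j, NormedSpace.exp (-(t • ξ)) (e j)
      = Complex.exp ((-(t * μ j) : ℝ) : ℂ) • e j := by
    intro j
    refine exp_apply_eigen _ _ _ ?_
    rw [← neg_smul t ξ, hsmul (-t) j]
    norm_num
  have hsaA : IsSelfAdjoint (NormedSpace.exp (t • ξ)) :=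
    ((IsSelfAdjoint.all t).smul hξ).exp
  -- entries of the conjugated operator
  have hBentry : ∀ i j,
      ‖⟪e i, (NormedSpace.exp (t • ξ) ∘L b ∘L NormedSpace.exp (-(t • ξ))) (e j)⟫_ℂ‖ ^ 2
        = Real.exp (2 * t * (μ i - μ j)) * ‖⟪e i, b (e j)⟫_ℂ‖ ^ 2 := by
    intro i j
    simp only [ContinuousLinearMap.comp_apply]
    have hval : ⟪e i, NormedSpace.exp (t • ξ) (b (NormedSpace.exp (-(t • ξ)) (e j)))⟫_ℂ
        = ((Real.exp (t * μ i) * Real.exp (-(t * μ j)) : ℝ) : ℂ) * ⟪e i, b (e j)⟫_ℂ := by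
      rw [hB j, map_smul, map_smul, inner_smul_right]
      have h5 : ⟪e i, NormedSpace.exp (t • ξ) (b (e j))⟫_ℂ
          = ⟪NormedSpace.exp (t • ξ) (e i), b (e j)⟫_ℂ := by
        rw [← ContinuousLinearMap.adjoint_inner_left, hsaA.adjoint_eq]
      rw [h5, hA i, inner_smul_left, ← Complex.ofReal_exp, ← Complex.ofReal_exp,
        Complex.conj_ofReal, Complex.ofReal_mul]
      ring
    rw [hval, norm_mul, Complex.norm_real, Real.norm_eq_abs,
      abs_of_pos (by positivity), mul_pow, ← Real.exp_add, pow_two, ← Real.exp_add]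
    congr 2
    ring
  -- entrywise formula for hsNorm of projected pieces
  have hPn : ∀ lam mu : ℝ, hsNorm (eigProj ξ lam ∘L b ∘L eigProj ξ mu) ^ 2
      = ∑ i, ∑ j, if μ i = lam ∧ μ j = mu then ‖⟪e i, b (e j)⟫_ℂ‖ ^ 2 else 0 := by
    intro lam mu
    rw [hsNorm_sq e]
    exact Finset.sum_congr rfl fun i _ => Finset.sum_congr rfl fun j _ => hPentry lam mu i j
  rw [hsNorm_sq e]
  simp_rw [hBentry]
  have key : ∀ i j, Real.exp (2*t*(μ i - μ j)) * ‖⟪e i, b (e j)⟫_ℂ‖ ^ 2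
      = ∑ lam ∈ S, ∑ mu ∈ S, (if μ i = lam ∧ μ j = mu then
          Real.exp (2*t*(lam - mu)) * ‖⟪e i, b (e j)⟫_ℂ‖ ^ 2 else 0) := by
    intro i j
    have h1 : ∀ lam : ℝ, (∑ mu ∈ S, if μ i = lam ∧ μ j = mu then
        Real.exp (2*t*(lam - mu)) * ‖⟪e i, b (e j)⟫_ℂ‖ ^ 2 else 0)
        = if μ i = lam then Real.exp (2*t*(lam - μ j)) * ‖⟪e i, b (e j)⟫_ℂ‖ ^ 2 else 0 := by
      intro lam
      by_cases h : μ i = lam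
      · simp only [h, true_and]
        rw [Finset.sum_ite_eq]
        simp [hμS j]
      · simp [h]
    simp_rw [h1]
    rw [Finset.sum_ite_eq]
    simp [hμS i]
  simp_rw [key, hPn, Finset.mul_sum, mul_ite, mul_zero]
  calc (∑ i, ∑ j, ∑ lam ∈ S, ∑ mu ∈ S, (if μ i = lam ∧ μ j = mu then
          Real.exp (2*t*(lam - mu)) * ‖⟪e i, b (e j)⟫_ℂ‖ ^ 2 else 0))
      = ∑ i, ∑ lam ∈ S, ∑ j, ∑ mu ∈ S, (if μ i = lam ∧ μ j = mu then
          Real.exp (2*t*(lam - mu)) * ‖⟪e i, b (e j)⟫_ℂ‖ ^ 2 else 0) :=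
        Finset.sum_congr rfl fun i _ => Finset.sum_comm
    _ = ∑ lam ∈ S, ∑ i, ∑ j, ∑ mu ∈ S, (if μ i = lam ∧ μ j = mu then
          Real.exp (2*t*(lam - mu)) * ‖⟪e i, b (e j)⟫_ℂ‖ ^ 2 else 0) := Finset.sum_comm
    _ = ∑ lam ∈ S, ∑ i, ∑ mu ∈ S, ∑ j, (if μ i = lam ∧ μ j = mu then
          Real.exp (2*t*(lam - mu)) * ‖⟪e i, b (e j)⟫_ℂ‖ ^ 2 else 0) :=
        Finset.sum_congr rfl fun lam _ => Finset.sum_congr rfl fun i _ => Finset.sum_comm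
    _ = ∑ lam ∈ S, ∑ mu ∈ S, ∑ i, ∑ j, (if μ i = lam ∧ μ j = mu then
          Real.exp (2*t*(lam - mu)) * ‖⟪e i, b (e j)⟫_ℂ‖ ^ 2 else 0) :=
        Finset.sum_congr rfl fun lam _ => Finset.sum_comm
end

section
/- Let V be a finite-dimensional complex inner product space, ξ a self-adjoint endomorphism of V, and b an endomorphism of V. If there exists M such that ‖exp(tξ) ∘ b ∘ exp(−tξ)‖ ≤ M for all t ≥ 0, then P_μ ∘ b ∘ P_λ = 0 for every pair of eigenvalues λ < μ of ξ; that is, b preserves the increasing eigen-filtration of ξ. -/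
open scoped Topology

variable {V : Type*} [NormedAddCommGroup V] [InnerProductSpace ℂ V] [FiniteDimensional ℂ V]

local notation "⟪" x ", " y "⟫" => @inner ℂ _ _ x y

/-- exp of an endomorphism acts on eigenvectors as scalar exp. -/
lemma exp_apply_eigenvector {A : V →L[ℂ] V} {x : V} {a : ℂ} (h : A x = a • x) :
    NormedSpace.exp A x = Complex.exp a • x := by
  have hpow : ∀ n : ℕ, (A ^ n) x = a ^ n • x := by
    intro n
    induction n with
    | zero => simp
    | succ n ih =>
      rw [pow_succ, pow_succ, ContinuousLinearMap.mul_apply, h, map_smul, ih, smul_smul]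
      ring_nf
  have hs := NormedSpace.exp_series_hasSum_exp' (𝕂 := ℂ) A
  have h2 : HasSum (fun n : ℕ => ((n.factorial⁻¹ : ℂ) • A ^ n) x) (NormedSpace.exp A x) :=
    hs.mapL (ContinuousLinearMap.apply ℂ V x)
  have h3 : HasSum (fun n : ℕ => ((n.factorial⁻¹ : ℂ) * a ^ n) • x)
      (Complex.exp a • x) := by
    have := (NormedSpace.exp_series_hasSum_exp' (𝕂 := ℂ) a).smul_const x
    simpa [smul_eq_mul, Complex.exp_eq_exp_ℂ] using this
  have h4 : (fun n : ℕ => ((n.factorial⁻¹ : ℂ) • A ^ n) x)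
      = fun n : ℕ => ((n.factorial⁻¹ : ℂ) * a ^ n) • x := by
    funext n
    simp [hpow n, smul_smul]
  rw [h4] at h2
  exact h2.unique h3

lemma trace_eq_sum_inner {ι : Type*} [Fintype ι] [DecidableEq ι]
    (b : OrthonormalBasis ι ℂ V) (T : V →ₗ[ℂ] V) :
    LinearMap.trace ℂ V T = ∑ i, ⟪b i, T (b i)⟫ := by
  rw [LinearMap.trace_eq_matrix_trace ℂ b.toBasis, Matrix.trace]
  congr 1
  funext i
  rw [Matrix.diag_apply, LinearMap.toMatrix_apply, b.coe_toBasis_repr_apply,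
    b.repr_apply_apply, b.coe_toBasis]

lemma norm_adjoint_apply_le_hsNorm (c : V →L[ℂ] V) {y : V} (hy : ‖y‖ = 1) :
    ‖ContinuousLinearMap.adjoint c y‖ ≤ hsNorm c := by
  classical
  have horth : Orthonormal ℂ ((↑) : ({y} : Set V) → V) := by
    rw [orthonormal_subtype_iff_ite]
    intro u hu v hv
    simp only [Set.mem_singleton_iff] at hu hv
    subst hu; subst hv
    simp [inner_self_eq_norm_sq_to_K, hy]
  obtain ⟨u, bas, hyu, hbas⟩ := horth.exists_orthonormalBasis_extension
  have hyu' : y ∈ u := hyu rfl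
  have htr : (LinearMap.trace ℂ V
      ((c ∘L ContinuousLinearMap.adjoint c : V →L[ℂ] V) : V →ₗ[ℂ] V)).re
      = ∑ i : u, ‖ContinuousLinearMap.adjoint c (bas i)‖ ^ 2 := by
    rw [trace_eq_sum_inner bas]
    rw [Complex.re_sum]
    congr 1
    funext i
    have : ⟪bas i, (c ∘L ContinuousLinearMap.adjoint c) (bas i)⟫
        = ⟪ContinuousLinearMap.adjoint c (bas i), ContinuousLinearMap.adjoint c (bas i)⟫ := by
      rw [ContinuousLinearMap.comp_apply, ← ContinuousLinearMap.adjoint_inner_left]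
    rw [ContinuousLinearMap.coe_coe, this, inner_self_eq_norm_sq_to_K]
    norm_cast
  have hle : ‖ContinuousLinearMap.adjoint c y‖ ^ 2
      ≤ ∑ i : u, ‖ContinuousLinearMap.adjoint c (bas i)‖ ^ 2 := by
    have := Finset.sum_le_sum_of_subset_of_nonneg
      (Finset.singleton_subset_iff.mpr (Finset.mem_univ (⟨y, hyu'⟩ : u)))
      (fun i _ _ => sq_nonneg ‖ContinuousLinearMap.adjoint c (bas i)‖)
    simpa [hbas] using this
  have : ‖ContinuousLinearMap.adjoint c y‖
      = Real.sqrt (‖ContinuousLinearMap.adjoint c y‖ ^ 2) := by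
    rw [Real.sqrt_sq (norm_nonneg _)]
  rw [this, hsNorm, htr]
  exact Real.sqrt_le_sqrt hle

lemma norm_inner_le_hsNorm (c : V →L[ℂ] V) {x y : V} (hx : ‖x‖ = 1) (hy : ‖y‖ = 1) :
    ‖⟪c x, y⟫‖ ≤ hsNorm c := by
  rw [norm_inner_symm, ← ContinuousLinearMap.adjoint_inner_left]
  calc ‖⟪ContinuousLinearMap.adjoint c y, x⟫‖
      ≤ ‖ContinuousLinearMap.adjoint c y‖ * ‖x‖ := norm_inner_le_norm _ _
    _ ≤ hsNorm c := by rw [hx, mul_one]; exact norm_adjoint_apply_le_hsNorm c hy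

theorem filtration_of_bounded_exp_conj (ξ : V →L[ℂ] V) (hξ : IsSelfAdjoint ξ)
    (b : V →L[ℂ] V) (M : ℝ)
    (hbdd : ∀ t : ℝ, 0 ≤ t →
      hsNorm (NormedSpace.exp (t • ξ) ∘L b ∘L NormedSpace.exp (-(t • ξ))) ≤ M) :
    ∀ lam mu : ℝ, Module.End.HasEigenvalue (ξ : V →ₗ[ℂ] V) (lam : ℂ) →
      Module.End.HasEigenvalue (ξ : V →ₗ[ℂ] V) (mu : ℂ) → lam < mu →
      eigProj ξ mu ∘L b ∘L eigProj ξ lam = 0 := by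
  intro lam mu _ _ hlt
  set Elam := Module.End.eigenspace (ξ : V →ₗ[ℂ] V) (lam : ℂ) with hElam
  set Emu := Module.End.eigenspace (ξ : V →ₗ[ℂ] V) (mu : ℂ) with hEmu
  -- key for unit vectors
  have key1 : ∀ x : V, x ∈ Elam → ‖x‖ = 1 → ∀ y : V, y ∈ Emu → ‖y‖ = 1 →
      ⟪b x, y⟫ = 0 := by
    intro x hxmem hx y hymem hy
    have hξx : ξ x = (lam : ℂ) • x := Module.End.mem_eigenspace_iff.mp hxmem
    have hξy : ξ y = (mu : ℂ) • y := Module.End.mem_eigenspace_iff.mp hymem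
    set r := ‖⟪b x, y⟫‖ with hr
    have hMr : ∀ t : ℝ, 0 ≤ t → Real.exp (t * (mu - lam)) * r ≤ M := by
      intro t ht
      have hexp1 : NormedSpace.exp (-(t • ξ)) x = (Real.exp (-(t * lam)) : ℂ) • x := by
        have : (-(t • ξ)) x = ((-(t * lam) : ℝ) : ℂ) • x := by
          rw [ContinuousLinearMap.neg_apply, ContinuousLinearMap.smul_apply, hξx,
            ← Complex.coe_smul, smul_smul, ← neg_smul]
          congr 1
          push_cast
          ring_nf
        rw [exp_apply_eigenvector this, ← Complex.ofReal_exp]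
      have hexp2 : NormedSpace.exp (t • ξ) y = (Real.exp (t * mu) : ℂ) • y := by
        have : (t • ξ) y = ((t * mu : ℝ) : ℂ) • y := by
          rw [ContinuousLinearMap.smul_apply, hξy,
            ← Complex.coe_smul, smul_smul]
          congr 1
          push_cast
          ring_nf
        rw [exp_apply_eigenvector this, ← Complex.ofReal_exp]
      have hsa : ContinuousLinearMap.adjoint (NormedSpace.exp (t • ξ))
          = NormedSpace.exp (t • ξ) := by
        rw [← ContinuousLinearMap.star_eq_adjoint, NormedSpace.star_exp]
        congr 1
        rw [star_smul, star_trivial, hξ.star_eq]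
      have hinner : ⟪(NormedSpace.exp (t • ξ) ∘L b ∘L NormedSpace.exp (-(t • ξ))) x, y⟫
          = (Real.exp (-(t * lam)) : ℂ) * ((Real.exp (t * mu) : ℂ) * ⟪b x, y⟫) := by
        rw [ContinuousLinearMap.comp_apply, ContinuousLinearMap.comp_apply, hexp1, map_smul,
          map_smul, inner_smul_left, ← ContinuousLinearMap.adjoint_inner_right, hsa, hexp2,
          inner_smul_right]
        rw [Complex.conj_ofReal]
      have hnorm : ‖⟪(NormedSpace.exp (t • ξ) ∘L b ∘L NormedSpace.exp (-(t • ξ))) x, y⟫‖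
          = Real.exp (t * (mu - lam)) * r := by
        rw [hinner, norm_mul, norm_mul, Complex.norm_real, Complex.norm_real,
          Real.norm_eq_abs, Real.norm_eq_abs, abs_of_pos (Real.exp_pos _),
          abs_of_pos (Real.exp_pos _), ← mul_assoc, ← Real.exp_add]
        congr 2
        ring
      calc Real.exp (t * (mu - lam)) * r
          = ‖⟪(NormedSpace.exp (t • ξ) ∘L b ∘L NormedSpace.exp (-(t • ξ))) x, y⟫‖ :=
            hnorm.symm
        _ ≤ hsNorm (NormedSpace.exp (t • ξ) ∘L b ∘L NormedSpace.exp (-(t • ξ))) :=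
            norm_inner_le_hsNorm _ hx hy
        _ ≤ M := hbdd t ht
    by_contra hne
    have hrpos : 0 < r := by
      rw [hr]
      exact norm_pos_iff.mpr hne
    have hMpos : 0 < M := by
      have h0 := hMr 0 le_rfl
      simp only [zero_mul, Real.exp_zero, one_mul] at h0
      exact lt_of_lt_of_le hrpos h0
    have hml : 0 < mu - lam := sub_pos.mpr hlt
    set t := M / (r * (mu - lam)) with htdef
    have ht : 0 ≤ t := le_of_lt (div_pos hMpos (mul_pos hrpos hml))
    have h1 : t * (mu - lam) = M / r := by
      rw [htdef]
      field_simp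
    have h2 : M / r < Real.exp (t * (mu - lam)) := by
      rw [h1]
      calc M / r < M / r + 1 := lt_add_one _
        _ ≤ Real.exp (M / r) := Real.add_one_le_exp _
    have h3 : M < Real.exp (t * (mu - lam)) * r := by
      have := (div_lt_iff₀ hrpos).mp h2
      linarith [mul_lt_mul_of_pos_right h2 hrpos,
        (div_mul_cancel₀ M (ne_of_gt hrpos) : M / r * r = M)]
    exact absurd (hMr t ht) (not_le.mpr h3)
  -- key for all vectors
  have key : ∀ x : V, x ∈ Elam → ∀ y : V, y ∈ Emu → ⟪b x, y⟫ = 0 := by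
    intro x hxmem y hymem
    by_cases hx0 : x = 0
    · simp [hx0]
    by_cases hy0 : y = 0
    · simp [hy0]
    set x' := ((‖x‖⁻¹ : ℝ) : ℂ) • x with hx'
    set y' := ((‖y‖⁻¹ : ℝ) : ℂ) • y with hy'
    have hx'mem : x' ∈ Elam := Elam.smul_mem _ hxmem
    have hy'mem : y' ∈ Emu := Emu.smul_mem _ hymem
    have hxn : ‖x‖ ≠ 0 := norm_ne_zero_iff.mpr hx0
    have hyn : ‖y‖ ≠ 0 := norm_ne_zero_iff.mpr hy0
    have hx'1 : ‖x'‖ = 1 := by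
      rw [hx', norm_smul, Complex.norm_real, Real.norm_eq_abs, abs_of_nonneg
        (inv_nonneg.mpr (norm_nonneg x)), inv_mul_cancel₀ hxn]
    have hy'1 : ‖y'‖ = 1 := by
      rw [hy', norm_smul, Complex.norm_real, Real.norm_eq_abs, abs_of_nonneg
        (inv_nonneg.mpr (norm_nonneg y)), inv_mul_cancel₀ hyn]
    have h0 := key1 x' hx'mem hx'1 y' hy'mem hy'1
    rw [hx', hy', map_smul, inner_smul_left, inner_smul_right] at h0
    have hcne : (starRingEnd ℂ) ((‖x‖⁻¹ : ℝ) : ℂ) ≠ 0 := by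
      simp [Complex.conj_ofReal, hxn]
    have hcne2 : ((‖y‖⁻¹ : ℝ) : ℂ) ≠ 0 := by
      simp [hyn]
    rcases mul_eq_zero.mp h0 with h | h
    · exact absurd h hcne
    rcases mul_eq_zero.mp h with h | h
    · exact absurd h hcne2
    exact h
  -- conclude
  ext v
  simp only [ContinuousLinearMap.comp_apply, ContinuousLinearMap.zero_apply, eigProj,
    Submodule.subtypeL_apply]
  have hmem : (b ((Submodule.orthogonalProjectionOnto Elam v : V))) ∈ Emuᗮ := by
    rw [Submodule.mem_orthogonal']
    intro u hu
    exact key _ (Submodule.coe_mem _) u hu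
  rw [Submodule.orthogonalProjectionOnto_apply_of_mem_orthogonal hmem]
  simp
end

section
/- Let V be a finite-dimensional complex inner product space. Let (ξ_p) be a sequence of self-adjoint endomorphisms of V converging to an endomorphism ξ (necessarily self-adjoint), let (b_p) be a sequence of endomorphisms of V converging to b, and let (t_p) be a sequence of reals tending to +∞. If there exists M such that ‖exp(t_p ξ_p) ∘ b_p ∘ exp(−t_p ξ_p)‖ ≤ M for all p, then P_μ ∘ b ∘ P_λ = 0 for every pair of eigenvalues λ < μ of ξ; that is, b preserves the increasing eigen-filtration of ξ. -/
set_option maxHeartbeats 1000000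
set_option linter.unusedSectionVars false

open scoped Topology

variable {V : Type*} [NormedAddCommGroup V] [InnerProductSpace ℂ V] [FiniteDimensional ℂ V]

open scoped InnerProductSpace

section Aux

variable {ι : Type*} [Fintype ι] [DecidableEq ι]

-- exp applied to eigenvector
lemma exp_apply_eig (A : V →L[ℂ] V) (x : V) (c : ℂ) (h : A x = c • x) :
    NormedSpace.exp A x = Complex.exp c • x := by
  have hpow : ∀ n : ℕ, (A ^ n) x = c ^ n • x := by
    intro n
    induction n with
    | zero => simp
    | succ n ih =>
      rw [pow_succ, pow_succ, ContinuousLinearMap.mul_apply, h, map_smul, ih, smul_smul,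
        mul_comm]
  have hs : Summable (fun n : ℕ => ((n.factorial : ℂ))⁻¹ • A ^ n) := NormedSpace.expSeries_summable' A
  have h1 : HasSum (fun n : ℕ => (((n.factorial : ℂ))⁻¹ * c ^ n) • x) (NormedSpace.exp A x) := by
    have := hs.hasSum.mapL (ContinuousLinearMap.apply ℂ V x)
    simp only [ContinuousLinearMap.apply_apply, ContinuousLinearMap.smul_apply, hpow,
      smul_smul] at this
    rwa [NormedSpace.exp_eq_tsum ℂ]
  have h2 : HasSum (fun n : ℕ => (((n.factorial : ℂ))⁻¹ * c ^ n) • x) (Complex.exp c • x) := by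
    have h3 : HasSum (fun n : ℕ => ((n.factorial : ℂ))⁻¹ • c ^ n) (NormedSpace.exp c) := by
      rw [NormedSpace.exp_eq_tsum ℂ]
      exact (NormedSpace.expSeries_summable' c).hasSum
    have := h3.smul_const x
    simpa [smul_eq_mul, Complex.exp_eq_exp_ℂ] using this
  exact h1.unique h2

lemma exp_apply_eig_real (A : V →L[ℂ] V) (x : V) (r : ℝ) (h : A x = (r : ℂ) • x) :
    NormedSpace.exp A x = (Real.exp r : ℂ) • x := by
  rw [exp_apply_eig A x r h, Complex.ofReal_exp]

lemma conj_inner_eq (ξ : V →L[ℂ] V) (hξ : IsSelfAdjoint ξ) {lam mu : ℝ} {x y : V}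
    (hx : ξ x = (lam : ℂ) • x) (hy : ξ y = (mu : ℂ) • y) (c : V →L[ℂ] V) (t : ℝ) :
    ⟪y, (NormedSpace.exp (t • ξ) ∘L c ∘L NormedSpace.exp (-(t • ξ))) x⟫_ℂ
      = (Real.exp (t * (mu - lam)) : ℂ) * ⟪y, c x⟫_ℂ := by
  have hsmul : IsSelfAdjoint (t • ξ) := by
    rw [IsSelfAdjoint, star_smul, star_trivial, hξ.star_eq]
  have hexp : IsSelfAdjoint (NormedSpace.exp (t • ξ)) := hsmul.exp
  have hx' : NormedSpace.exp (-(t • ξ)) x = (Real.exp (-(t * lam)) : ℂ) • x := by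
    apply exp_apply_eig_real
    rw [ContinuousLinearMap.neg_apply, ContinuousLinearMap.smul_apply, hx,
      RCLike.real_smul_eq_coe_smul (K := ℂ), smul_smul, ← neg_smul]
    push_cast
    rfl
  have hy' : NormedSpace.exp (t • ξ) y = (Real.exp (t * mu) : ℂ) • y := by
    apply exp_apply_eig_real
    rw [ContinuousLinearMap.smul_apply, hy, RCLike.real_smul_eq_coe_smul (K := ℂ), smul_smul]
    push_cast
    rfl
  rw [ContinuousLinearMap.comp_apply, ContinuousLinearMap.comp_apply, hx', map_smul, map_smul,
    inner_smul_right]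
  have hadj : ⟪y, (NormedSpace.exp (t • ξ)) (c x)⟫_ℂ
      = ⟪(NormedSpace.exp (t • ξ)) y, c x⟫_ℂ := by
    rw [← ContinuousLinearMap.adjoint_inner_left, ← ContinuousLinearMap.star_eq_adjoint,
      hexp.star_eq]
  rw [hadj, hy', inner_smul_left, Complex.conj_ofReal, ← mul_assoc, ← Complex.ofReal_mul,
    ← Real.exp_add]
  have harg : -(t * lam) + t * mu = t * (mu - lam) := by ring
  rw [harg]

lemma trace_onb (e : OrthonormalBasis ι ℂ V) (f : V →L[ℂ] V) :
    LinearMap.trace ℂ V (f : V →ₗ[ℂ] V) = ∑ i, ⟪e i, f (e i)⟫_ℂ := by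
  rw [LinearMap.trace_eq_matrix_trace ℂ e.toBasis, Matrix.trace]
  congr 1
  ext i
  rw [Matrix.diag_apply, LinearMap.toMatrix_apply, OrthonormalBasis.coe_toBasis_repr_apply,
    OrthonormalBasis.repr_apply_apply, OrthonormalBasis.coe_toBasis]
  rfl

lemma parseval (e : OrthonormalBasis ι ℂ V) (w : V) :
    ‖w‖ ^ 2 = ∑ i, ‖⟪e i, w⟫_ℂ‖ ^ 2 := by
  have h := e.repr.norm_map w
  rw [← h, EuclideanSpace.norm_eq, Real.sq_sqrt (by positivity)]
  exact Finset.sum_congr rfl fun i _ => by rw [OrthonormalBasis.repr_apply_apply]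

lemma trace_re_eq_sum_adj (e : OrthonormalBasis ι ℂ V) (c : V →L[ℂ] V) :
    (LinearMap.trace ℂ V
      ((c ∘L ContinuousLinearMap.adjoint c : V →L[ℂ] V) : V →ₗ[ℂ] V)).re
    = ∑ i, ‖ContinuousLinearMap.adjoint c (e i)‖ ^ 2 := by
  rw [trace_onb e, Complex.re_sum]
  refine Finset.sum_congr rfl fun i _ => ?_
  rw [ContinuousLinearMap.comp_apply, ← ContinuousLinearMap.adjoint_inner_left,
    inner_self_eq_norm_sq_to_K]
  norm_cast

lemma trace_re_eq_entries (e : OrthonormalBasis ι ℂ V) (c : V →L[ℂ] V) :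
    (LinearMap.trace ℂ V
      ((c ∘L ContinuousLinearMap.adjoint c : V →L[ℂ] V) : V →ₗ[ℂ] V)).re
    = ∑ i, ∑ j, ‖⟪e i, c (e j)⟫_ℂ‖ ^ 2 := by
  rw [trace_re_eq_sum_adj e]
  refine Finset.sum_congr rfl fun j _ => ?_
  rw [parseval e]
  refine Finset.sum_congr rfl fun i _ => ?_
  rw [ContinuousLinearMap.adjoint_inner_right, ← inner_conj_symm]
  rw [RCLike.norm_conj]

lemma trace_re_nonneg (c : V →L[ℂ] V) :
    0 ≤ (LinearMap.trace ℂ V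
      ((c ∘L ContinuousLinearMap.adjoint c : V →L[ℂ] V) : V →ₗ[ℂ] V)).re := by
  rw [trace_re_eq_sum_adj (stdOrthonormalBasis ℂ V)]
  positivity

lemma hsNorm_eq (e : OrthonormalBasis ι ℂ V) (c : V →L[ℂ] V) :
    hsNorm c = Real.sqrt (∑ i, ∑ j, ‖⟪e i, c (e j)⟫_ℂ‖ ^ 2) := by
  rw [hsNorm, trace_re_eq_entries e]

lemma norm_apply_le_hsNorm (c : V →L[ℂ] V) (x : V) : ‖c x‖ ≤ hsNorm c * ‖x‖ := by
  set e := stdOrthonormalBasis ℂ V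
  have h1 : ‖c x‖ ^ 2 ≤ (∑ i, ‖ContinuousLinearMap.adjoint c (e i)‖ ^ 2) * ‖x‖ ^ 2 := by
    rw [parseval e, Finset.sum_mul]
    refine Finset.sum_le_sum fun i _ => ?_
    rw [← ContinuousLinearMap.adjoint_inner_left]
    calc ‖⟪ContinuousLinearMap.adjoint c (e i), x⟫_ℂ‖ ^ 2
        ≤ (‖ContinuousLinearMap.adjoint c (e i)‖ * ‖x‖) ^ 2 := by
          apply pow_le_pow_left₀ (norm_nonneg _) (norm_inner_le_norm _ _)
      _ = _ := by ring
  have h2 : hsNorm c = Real.sqrt (∑ i, ‖ContinuousLinearMap.adjoint c (e i)‖ ^ 2) := by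
    rw [hsNorm, trace_re_eq_sum_adj e]
  calc ‖c x‖ = Real.sqrt (‖c x‖ ^ 2) := (Real.sqrt_sq (norm_nonneg _)).symm
    _ ≤ Real.sqrt ((∑ i, ‖ContinuousLinearMap.adjoint c (e i)‖ ^ 2) * ‖x‖ ^ 2) :=
        Real.sqrt_le_sqrt h1
    _ = hsNorm c * ‖x‖ := by
        rw [Real.sqrt_mul (by positivity), Real.sqrt_sq (norm_nonneg _), h2]

lemma inner_le_hsNorm (c : V →L[ℂ] V) (x y : V) :
    ‖⟪y, c x⟫_ℂ‖ ≤ hsNorm c * ‖y‖ * ‖x‖ := by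
  calc ‖⟪y, c x⟫_ℂ‖ ≤ ‖y‖ * ‖c x‖ := norm_inner_le_norm _ _
    _ ≤ ‖y‖ * (hsNorm c * ‖x‖) := by
        apply mul_le_mul_of_nonneg_left (norm_apply_le_hsNorm c x) (norm_nonneg _)
    _ = _ := by ring

lemma hsNorm_le (c : V →L[ℂ] V) :
    hsNorm c ≤ Real.sqrt (Module.finrank ℂ V) * ‖c‖ := by
  set e := stdOrthonormalBasis ℂ V
  have h2 : hsNorm c = Real.sqrt (∑ i, ‖ContinuousLinearMap.adjoint c (e i)‖ ^ 2) := by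
    rw [hsNorm, trace_re_eq_sum_adj e]
  rw [h2]
  have h3 : ∑ i : Fin (Module.finrank ℂ V), ‖ContinuousLinearMap.adjoint c (e i)‖ ^ 2
      ≤ (Module.finrank ℂ V : ℝ) * ‖c‖ ^ 2 := by
    calc ∑ i : Fin (Module.finrank ℂ V), ‖ContinuousLinearMap.adjoint c (e i)‖ ^ 2
        ≤ ∑ _i : Fin (Module.finrank ℂ V), ‖c‖ ^ 2 := by
          refine Finset.sum_le_sum fun i _ => ?_
          have := (ContinuousLinearMap.adjoint c).le_opNorm (e i)
          rw [e.orthonormal.1 i, mul_one] at this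
          calc ‖ContinuousLinearMap.adjoint c (e i)‖ ^ 2
              ≤ ‖ContinuousLinearMap.adjoint c‖ ^ 2 := by
                apply pow_le_pow_left₀ (norm_nonneg _) this
            _ = ‖c‖ ^ 2 := by
                rw [(ContinuousLinearMap.adjoint :
                  (V →L[ℂ] V) ≃ₗᵢ⋆[ℂ] (V →L[ℂ] V)).norm_map c]
      _ = _ := by rw [Finset.sum_const, Finset.card_univ, Fintype.card_fin, nsmul_eq_mul]
  calc Real.sqrt (∑ i, ‖ContinuousLinearMap.adjoint c (e i)‖ ^ 2)
      ≤ Real.sqrt ((Module.finrank ℂ V : ℝ) * ‖c‖ ^ 2) := Real.sqrt_le_sqrt h3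
    _ = _ := by rw [Real.sqrt_mul (by positivity), Real.sqrt_sq (norm_nonneg _)]

lemma sqrt_add_le' (a b : ℝ) (ha : 0 ≤ a) (hb : 0 ≤ b) :
    Real.sqrt (a + b) ≤ Real.sqrt a + Real.sqrt b := by
  calc Real.sqrt (a + b) ≤ Real.sqrt ((Real.sqrt a + Real.sqrt b) ^ 2) :=
      Real.sqrt_le_sqrt (by nlinarith [Real.sq_sqrt ha, Real.sq_sqrt hb, Real.sqrt_nonneg a, Real.sqrt_nonneg b, mul_nonneg (Real.sqrt_nonneg a) (Real.sqrt_nonneg b)])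
    _ = _ := Real.sqrt_sq (by positivity)

lemma interp (ξ : V →L[ℂ] V) (hξ : IsSelfAdjoint ξ) (c : V →L[ℂ] V) {t T : ℝ}
    (ht : 0 ≤ t) (htT : t ≤ T) :
    hsNorm (NormedSpace.exp (t • ξ) ∘L c ∘L NormedSpace.exp (-(t • ξ)))
      ≤ hsNorm c
        + hsNorm (NormedSpace.exp (T • ξ) ∘L c ∘L NormedSpace.exp (-(T • ξ))) := by
  classical
  have hsym : (ξ : V →ₗ[ℂ] V).IsSymmetric :=
    ContinuousLinearMap.isSelfAdjoint_iff_isSymmetric.mp hξ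
  have hn : Module.finrank ℂ V = Module.finrank ℂ V := rfl
  set e := hsym.eigenvectorBasis hn with he
  set μ := hsym.eigenvalues hn with hμ
  have heig : ∀ i, ξ (e i) = (μ i : ℂ) • e i := fun i => hsym.apply_eigenvectorBasis hn i
  set S : ℝ → ℝ := fun s => ∑ i, ∑ j,
    Real.exp (s * (μ i - μ j)) ^ 2 * ‖⟪e i, c (e j)⟫_ℂ‖ ^ 2 with hS
  have hSnonneg : ∀ s, 0 ≤ S s := fun s => by positivity
  have hkey : ∀ s : ℝ,
      hsNorm (NormedSpace.exp (s • ξ) ∘L c ∘L NormedSpace.exp (-(s • ξ)))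
        = Real.sqrt (S s) := by
    intro s
    rw [hsNorm_eq e]
    congr 1
    refine Finset.sum_congr rfl fun i _ => Finset.sum_congr rfl fun j _ => ?_
    rw [conj_inner_eq ξ hξ (heig j) (heig i) c s, norm_mul, Complex.norm_real,
      Real.norm_eq_abs, abs_of_pos (Real.exp_pos _), mul_pow]
  have hB : hsNorm c = Real.sqrt (∑ i, ∑ j, ‖⟪e i, c (e j)⟫_ℂ‖ ^ 2) := hsNorm_eq e c
  have hterm : S t ≤ (∑ i, ∑ j, ‖⟪e i, c (e j)⟫_ℂ‖ ^ 2) + S T := by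
    rw [hS, ← Finset.sum_add_distrib]
    refine Finset.sum_le_sum fun i _ => ?_
    rw [← Finset.sum_add_distrib]
    refine Finset.sum_le_sum fun j _ => ?_
    rcases le_total (μ i - μ j) 0 with hd | hd
    · have h1 : Real.exp (t * (μ i - μ j)) ≤ 1 := by
        rw [Real.exp_le_one_iff]
        exact mul_nonpos_of_nonneg_of_nonpos ht hd
      have h2 : Real.exp (t * (μ i - μ j)) ^ 2 ≤ 1 :=
        pow_le_one₀ (Real.exp_pos _).le h1
      nlinarith [h2, sq_nonneg ‖⟪e i, c (e j)⟫_ℂ‖,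
        mul_nonneg (sq_nonneg (Real.exp (T * (μ i - μ j)))) (sq_nonneg ‖⟪e i, c (e j)⟫_ℂ‖)]
    · have h1 : Real.exp (t * (μ i - μ j)) ≤ Real.exp (T * (μ i - μ j)) := by
        apply Real.exp_le_exp.mpr
        exact mul_le_mul_of_nonneg_right htT hd
      have h2 : Real.exp (t * (μ i - μ j)) ^ 2 ≤ Real.exp (T * (μ i - μ j)) ^ 2 :=
        pow_le_pow_left₀ (Real.exp_pos _).le h1 2
      nlinarith [h2, sq_nonneg ‖⟪e i, c (e j)⟫_ℂ‖]
  calc hsNorm (NormedSpace.exp (t • ξ) ∘L c ∘L NormedSpace.exp (-(t • ξ)))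
      = Real.sqrt (S t) := hkey t
    _ ≤ Real.sqrt ((∑ i, ∑ j, ‖⟪e i, c (e j)⟫_ℂ‖ ^ 2) + S T) := Real.sqrt_le_sqrt hterm
    _ ≤ Real.sqrt (∑ i, ∑ j, ‖⟪e i, c (e j)⟫_ℂ‖ ^ 2) + Real.sqrt (S T) :=
        sqrt_add_le' _ _ (by positivity) (hSnonneg T)
    _ = _ := by rw [← hB, ← hkey T]

end Aux

theorem filtration_of_bounded_exp_conj_seq
    (ξseq : ℕ → V →L[ℂ] V) (hsa : ∀ p, IsSelfAdjoint (ξseq p))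
    (ξ : V →L[ℂ] V) (hξconv : Filter.Tendsto ξseq Filter.atTop (𝓝 ξ))
    (bseq : ℕ → V →L[ℂ] V) (b : V →L[ℂ] V)
    (hbconv : Filter.Tendsto bseq Filter.atTop (𝓝 b))
    (tseq : ℕ → ℝ) (htconv : Filter.Tendsto tseq Filter.atTop Filter.atTop)
    (M : ℝ)
    (hbdd : ∀ p, hsNorm (NormedSpace.exp (tseq p • ξseq p) ∘L bseq p ∘L
      NormedSpace.exp (-(tseq p • ξseq p))) ≤ M) :
    ∀ lam mu : ℝ, Module.End.HasEigenvalue (ξ : V →ₗ[ℂ] V) (lam : ℂ) →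
      Module.End.HasEigenvalue (ξ : V →ₗ[ℂ] V) (mu : ℂ) → lam < mu →
      eigProj ξ mu ∘L b ∘L eigProj ξ lam = 0 := by
  have hξsa : IsSelfAdjoint ξ := by
    have h1 : Filter.Tendsto (fun p => star (ξseq p)) Filter.atTop (𝓝 (star ξ)) :=
      (continuous_star.tendsto ξ).comp hξconv
    have h2 : (fun p => star (ξseq p)) = ξseq := funext fun p => (hsa p).star_eq
    rw [h2] at h1
    exact tendsto_nhds_unique h1 hξconv
  intro lam mu _ _ hlt
  obtain ⟨K, hK⟩ : ∃ K : ℝ, K = Real.sqrt (Module.finrank ℂ V) * (‖b‖ + 1) + M := ⟨_, rfl⟩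
  -- the key bound for eigenvectors
  have hbound : ∀ x y : V, ξ x = (lam : ℂ) • x → ξ y = (mu : ℂ) • y →
      ∀ t : ℝ, 0 ≤ t →
        Real.exp (t * (mu - lam)) * ‖⟪y, b x⟫_ℂ‖ ≤ K * ‖y‖ * ‖x‖ := by
    intro x y hx hy t ht
    have hev1 : ∀ᶠ p in Filter.atTop, t ≤ tseq p := htconv.eventually_ge_atTop t
    have hev2 : ∀ᶠ p in Filter.atTop, ‖bseq p‖ ≤ ‖b‖ + 1 :=
      hbconv.norm.eventually_le_const (lt_add_one ‖b‖)
    have hevle : ∀ᶠ p in Filter.atTop,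
        ‖⟪y, (NormedSpace.exp (t • ξseq p) ∘L bseq p ∘L
          NormedSpace.exp (-(t • ξseq p))) x⟫_ℂ‖ ≤ K * ‖y‖ * ‖x‖ := by
      filter_upwards [hev1, hev2] with p h1 h2
      have step1 : hsNorm (NormedSpace.exp (t • ξseq p) ∘L bseq p ∘L
          NormedSpace.exp (-(t • ξseq p))) ≤ K := by
        calc hsNorm (NormedSpace.exp (t • ξseq p) ∘L bseq p ∘L
              NormedSpace.exp (-(t • ξseq p)))
            ≤ hsNorm (bseq p) + hsNorm (NormedSpace.exp (tseq p • ξseq p) ∘L bseq p ∘L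
              NormedSpace.exp (-(tseq p • ξseq p))) := interp (ξseq p) (hsa p) (bseq p) ht h1
          _ ≤ Real.sqrt (Module.finrank ℂ V) * ‖bseq p‖ + M :=
              add_le_add (hsNorm_le (bseq p)) (hbdd p)
          _ ≤ K := by
              rw [hK]
              have := mul_le_mul_of_nonneg_left h2 (Real.sqrt_nonneg
                (Module.finrank ℂ V : ℝ))
              linarith
      calc ‖⟪y, (NormedSpace.exp (t • ξseq p) ∘L bseq p ∘L
            NormedSpace.exp (-(t • ξseq p))) x⟫_ℂ‖
          ≤ hsNorm (NormedSpace.exp (t • ξseq p) ∘L bseq p ∘L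
            NormedSpace.exp (-(t • ξseq p))) * ‖y‖ * ‖x‖ := inner_le_hsNorm _ _ _
        _ ≤ K * ‖y‖ * ‖x‖ := by
            have h3 : (0:ℝ) ≤ ‖y‖ * ‖x‖ := by positivity
            have := mul_le_mul_of_nonneg_right step1 h3
            calc _ = _ * (‖y‖ * ‖x‖) := by ring
              _ ≤ K * (‖y‖ * ‖x‖) := this
              _ = K * ‖y‖ * ‖x‖ := by ring
    have htends : Filter.Tendsto (fun p => ⟪y, (NormedSpace.exp (t • ξseq p) ∘L bseq p ∘L
        NormedSpace.exp (-(t • ξseq p))) x⟫_ℂ) Filter.atTop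
        (𝓝 ⟪y, (NormedSpace.exp (t • ξ) ∘L b ∘L NormedSpace.exp (-(t • ξ))) x⟫_ℂ) := by
      have hA : Filter.Tendsto (fun p => NormedSpace.exp (t • ξseq p)) Filter.atTop
          (𝓝 (NormedSpace.exp (t • ξ))) :=
        (NormedSpace.exp_analytic (𝕂 := ℂ) (t • ξ)).continuousAt.tendsto.comp (hξconv.const_smul t)
      have hC : Filter.Tendsto (fun p => NormedSpace.exp (-(t • ξseq p))) Filter.atTop
          (𝓝 (NormedSpace.exp (-(t • ξ)))) :=
        (NormedSpace.exp_analytic (𝕂 := ℂ) (-(t • ξ))).continuousAt.tendsto.comp (hξconv.const_smul t).neg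
      have hcomp : Filter.Tendsto (fun p => NormedSpace.exp (t • ξseq p) ∘L bseq p ∘L
          NormedSpace.exp (-(t • ξseq p))) Filter.atTop
          (𝓝 (NormedSpace.exp (t • ξ) ∘L b ∘L NormedSpace.exp (-(t • ξ)))) :=
        hA.mul (hbconv.mul hC)
      have heval : Filter.Tendsto (fun p => (NormedSpace.exp (t • ξseq p) ∘L bseq p ∘L
          NormedSpace.exp (-(t • ξseq p))) x) Filter.atTop
          (𝓝 ((NormedSpace.exp (t • ξ) ∘L b ∘L NormedSpace.exp (-(t • ξ))) x)) :=
        ((ContinuousLinearMap.apply ℂ V x).continuous.tendsto _).comp hcomp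
      exact Filter.Tendsto.inner tendsto_const_nhds heval
    have hfin : ‖⟪y, (NormedSpace.exp (t • ξ) ∘L b ∘L
        NormedSpace.exp (-(t • ξ))) x⟫_ℂ‖ ≤ K * ‖y‖ * ‖x‖ :=
      le_of_tendsto htends.norm hevle
    rw [conj_inner_eq ξ hξsa hx hy b t, norm_mul, Complex.norm_real, Real.norm_eq_abs,
      abs_of_pos (Real.exp_pos _)] at hfin
    exact hfin
  -- eigenvector pairing vanishes
  have hzero : ∀ x y : V, ξ x = (lam : ℂ) • x → ξ y = (mu : ℂ) • y → ⟪y, b x⟫_ℂ = 0 := by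
    intro x y hx hy
    by_contra hne
    have hr : 0 < ‖⟪y, b x⟫_ℂ‖ := norm_pos_iff.mpr hne
    have hDpos : (0:ℝ) < mu - lam := sub_pos.mpr hlt
    obtain ⟨Q, hQ⟩ : ∃ Q : ℝ, Q = K * ‖y‖ * ‖x‖ / ‖⟪y, b x⟫_ℂ‖ := ⟨_, rfl⟩
    have hEQ : ∀ t : ℝ, 0 ≤ t → Real.exp (t * (mu - lam)) ≤ Q := by
      intro t ht
      rw [hQ]
      exact (le_div_iff₀ hr).mpr (hbound x y hx hy t ht)
    obtain ⟨t₀, ht₀, h5⟩ : ∃ t₀ : ℝ, 0 ≤ t₀ ∧ Q ≤ t₀ * (mu - lam) := by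
      refine ⟨max (Q / (mu - lam)) 0, le_max_right _ _, ?_⟩
      have hQD : Q / (mu - lam) * (mu - lam) = Q := div_mul_cancel₀ _ hDpos.ne'
      exact le_trans (le_of_eq hQD.symm)
        (mul_le_mul_of_nonneg_right (le_max_left _ _) hDpos.le)
    have h6 := Real.add_one_le_exp (t₀ * (mu - lam))
    have h7 := hEQ t₀ ht₀
    linarith
  -- conclude the operator identity
  ext v
  simp only [eigProj, ContinuousLinearMap.comp_apply, Submodule.subtypeL_apply,
    ContinuousLinearMap.zero_apply]
  have hxmem := (Submodule.orthogonalProjectionOnto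
    (Module.End.eigenspace (ξ : V →ₗ[ℂ] V) (lam : ℂ)) v).2
  rw [Module.End.mem_eigenspace_iff] at hxmem
  have hmem : b ((Submodule.orthogonalProjectionOnto
      (Module.End.eigenspace (ξ : V →ₗ[ℂ] V) (lam : ℂ)) v : V))
      ∈ (Module.End.eigenspace (ξ : V →ₗ[ℂ] V) (mu : ℂ))ᗮ := by
    rw [Submodule.mem_orthogonal]
    intro y hy
    rw [Module.End.mem_eigenspace_iff] at hy
    exact hzero _ y hxmem hy
  rw [Submodule.orthogonalProjectionOnto_apply_of_mem_orthogonal hmem]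
  simp
end

section
/- Let E be a finite-dimensional real inner product space, f : E → ℝ a differentiable function, and let a > 0, c > 0 and θ ∈ [1/2, 1) be constants. Let t₁ ≤ t₂ be reals and let φ : ℝ → E be continuously differentiable on [t₁, t₂]. Assume that for every t ∈ [t₁, t₂]: f(φ(t)) > 0, f′(φ(t))(φ′(t)) ≤ −c·‖φ′(t)‖², and a·f(φ(t))^θ ≤ ‖φ′(t)‖. Then ‖φ(t₂) − φ(t₁)‖ ≤ (f(φ(t₁))^{1−θ} − f(φ(t₂))^{1−θ}) / (a·c·(1−θ)). -/
/-!
Along the flow, `V t = f (φ t) ^ (1 - θ) / (a c (1 - θ))` is a Lyapunov function whose decrease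
dominates the speed: `V' = f^{-θ} · f′(φ)(φ′) / (a c) ≤ -f^{-θ} ‖φ′‖² / a ≤ -‖φ′‖`, by the descent
condition and then the Łojasiewicz inequality. Integrating, the length of the curve, and hence
`‖φ t₂ - φ t₁‖`, is at most `V t₁ - V t₂`.
-/

open Set

theorem norm_sub_le_sub_of_norm_deriv_le_neg_deriv {E : Type*} [NormedAddCommGroup E]
    [NormedSpace ℝ E] {φ φ' : ℝ → E} {V V' : ℝ → ℝ} {a b : ℝ} (hab : a ≤ b)
    (hφ : ContinuousOn φ (Icc a b)) (hφ' : ∀ t ∈ Ico a b, HasDerivWithinAt φ (φ' t) (Ici t) t)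
    (hV : ContinuousOn V (Icc a b)) (hV' : ∀ t ∈ Ico a b, HasDerivWithinAt V (V' t) (Ici t) t)
    (hbound : ∀ t ∈ Ico a b, ‖φ' t‖ ≤ -V' t) :
    ‖φ b - φ a‖ ≤ V a - V b :=
  image_norm_le_of_norm_deriv_right_le_deriv_boundary' (hφ.sub continuousOn_const)
    (fun t ht => (hφ' t ht).sub_const _) (by simp) (continuousOn_const.sub hV)
    (fun t ht => (hV' t ht).const_sub _) hbound ⟨hab, le_rfl⟩

theorem le_neg_mul_rpow_neg_div_of_lojasiewicz {a c θ y n D : ℝ} (ha : 0 < a) (hc : 0 < c)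
    (hy : 0 < y) (hdesc : D ≤ -c * n ^ 2) (hLoj : a * y ^ θ ≤ n) :
    n ≤ -D * y ^ (-θ) / (a * c) := by
  have hyθ : 0 < y ^ θ := Real.rpow_pos_of_pos hy θ
  have hn : 0 < n := (mul_pos ha hyθ).trans_le hLoj
  have key : a * c * y ^ θ * n ≤ -D :=
    calc a * c * y ^ θ * n = c * n * (a * y ^ θ) := by ring
      _ ≤ c * n * n := by gcongr
      _ ≤ -D := by linarith
  rw [Real.rpow_neg hy.le, le_div_iff₀ (by positivity), ← div_eq_mul_inv, le_div_iff₀ hyθ]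
  linarith

theorem norm_sub_le_of_gradient_flow_lojasiewicz_general
    {E : Type*} [NormedAddCommGroup E] [InnerProductSpace ℝ E]
    (f : E → ℝ) (hf : Differentiable ℝ f)
    (a c θ : ℝ) (ha : 0 < a) (hc : 0 < c) (hθ₂ : θ < 1)
    (t₁ t₂ : ℝ) (ht : t₁ ≤ t₂) (φ φ' : ℝ → E)
    (hderiv : ∀ t ∈ Set.Icc t₁ t₂, HasDerivAt φ (φ' t) t)
    (hpos : ∀ t ∈ Set.Icc t₁ t₂, 0 < f (φ t))
    (hdesc : ∀ t ∈ Set.Icc t₁ t₂, fderiv ℝ f (φ t) (φ' t) ≤ -c * ‖φ' t‖ ^ 2)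
    (hLoj : ∀ t ∈ Set.Icc t₁ t₂, a * f (φ t) ^ θ ≤ ‖φ' t‖) :
    ‖φ t₂ - φ t₁‖ ≤ (f (φ t₁) ^ (1 - θ) - f (φ t₂) ^ (1 - θ)) / (a * c * (1 - θ)) := by
  have hθ : 1 - θ ≠ 0 := by linarith
  have hV : ∀ t ∈ Icc t₁ t₂, HasDerivAt (fun s => f (φ s) ^ (1 - θ) / (a * c * (1 - θ)))
      (fderiv ℝ f (φ t) (φ' t) * (1 - θ) * f (φ t) ^ (1 - θ - 1) / (a * c * (1 - θ))) t :=
    fun t ht => ((((hf (φ t)).hasFDerivAt.comp_hasDerivAt t (hderiv t ht)).rpow_const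
      (Or.inl (hpos t ht).ne')).div_const _)
  rw [sub_div]
  refine norm_sub_le_sub_of_norm_deriv_le_neg_deriv ht
    (fun t ht => (hderiv t ht).continuousAt.continuousWithinAt)
    (fun t ht => (hderiv t (Ico_subset_Icc_self ht)).hasDerivWithinAt)
    (fun t ht => (hV t ht).continuousAt.continuousWithinAt)
    (fun t ht => (hV t (Ico_subset_Icc_self ht)).hasDerivWithinAt) fun t ht => ?_
  have ht := Ico_subset_Icc_self ht
  convert le_neg_mul_rpow_neg_div_of_lojasiewicz ha hc (hpos t ht) (hdesc t ht) (hLoj t ht)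
    using 1
  rw [sub_sub_cancel_left]
  field_simp

theorem norm_sub_le_of_gradient_flow_lojasiewicz
    {E : Type*} [NormedAddCommGroup E] [InnerProductSpace ℝ E] [FiniteDimensional ℝ E]
    (f : E → ℝ) (hf : Differentiable ℝ f)
    (a c θ : ℝ) (ha : 0 < a) (hc : 0 < c) (hθ₁ : 1/2 ≤ θ) (hθ₂ : θ < 1)
    (t₁ t₂ : ℝ) (ht : t₁ ≤ t₂) (φ φ' : ℝ → E)
    (hderiv : ∀ t ∈ Set.Icc t₁ t₂, HasDerivAt φ (φ' t) t)
    (hcont : ContinuousOn φ' (Set.Icc t₁ t₂))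
    (hpos : ∀ t ∈ Set.Icc t₁ t₂, 0 < f (φ t))
    (hdesc : ∀ t ∈ Set.Icc t₁ t₂, fderiv ℝ f (φ t) (φ' t) ≤ -c * ‖φ' t‖ ^ 2)
    (hLoj : ∀ t ∈ Set.Icc t₁ t₂, a * f (φ t) ^ θ ≤ ‖φ' t‖) :
    ‖φ t₂ - φ t₁‖ ≤ (f (φ t₁) ^ (1 - θ) - f (φ t₂) ^ (1 - θ)) / (a * c * (1 - θ)) :=
  norm_sub_le_of_gradient_flow_lojasiewicz_general f hf a c θ ha hc hθ₂ t₁ t₂ ht φ φ' hderiv hpos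
    hdesc hLoj
end

section
/- Let E be a finite-dimensional real inner product space, K ⊆ E a compact set, f : E → ℝ a differentiable function, and c > 0. Let φ : ℝ → E be continuously differentiable on [0, ∞) with φ(t) ∈ K and f′(φ(t))(φ′(t)) ≤ −c·‖φ′(t)‖² for all t ≥ 0. Set l = inf_{t ≥ 0} f(φ(t)). Assume there exist δ > 0, a > 0 and θ ∈ [1/2, 1) such that for every t ≥ 0 with f(φ(t)) < l + δ one has a·(f(φ(t)) − l)^θ ≤ ‖φ′(t)‖. Then φ(t) converges in E as t → +∞. -/
open scoped Topology

theorem gradient_flow_converges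
    {E : Type*} [NormedAddCommGroup E] [InnerProductSpace ℝ E] [FiniteDimensional ℝ E]
    (K : Set E) (hK : IsCompact K)
    (f : E → ℝ) (hf : Differentiable ℝ f) (c : ℝ) (hc : 0 < c)
    (φ φ' : ℝ → E)
    (hderiv : ∀ t ∈ Set.Ici (0:ℝ), HasDerivAt φ (φ' t) t)
    (hcont : ContinuousOn φ' (Set.Ici 0))
    (hmem : ∀ t ∈ Set.Ici (0:ℝ), φ t ∈ K)
    (hdesc : ∀ t ∈ Set.Ici (0:ℝ), fderiv ℝ f (φ t) (φ' t) ≤ -c * ‖φ' t‖ ^ 2)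
    (l : ℝ) (hl : l = sInf ((fun t => f (φ t)) '' Set.Ici (0:ℝ)))
    (δ a θ : ℝ) (hδ : 0 < δ) (ha : 0 < a) (hθ₁ : 1/2 ≤ θ) (hθ₂ : θ < 1)
    (hLoj : ∀ t ∈ Set.Ici (0:ℝ), f (φ t) < l + δ → a * (f (φ t) - l) ^ θ ≤ ‖φ' t‖) :
    ∃ L : E, Filter.Tendsto φ Filter.atTop (𝓝 L) := by
  have h1θ : (0:ℝ) < 1 - θ := by linarith
  have hφcont : ContinuousOn φ (Set.Ici 0) := fun t ht =>
    (hderiv t ht).continuousAt.continuousWithinAt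
  -- derivative of F := f ∘ φ
  have hFd : ∀ t ∈ Set.Ici (0:ℝ),
      HasDerivAt (fun u => f (φ u)) (fderiv ℝ f (φ t) (φ' t)) t := fun t ht =>
    (hf (φ t)).hasFDerivAt.comp_hasDerivAt t (hderiv t ht)
  have hD0 : ∀ t ∈ Set.Ici (0:ℝ), fderiv ℝ f (φ t) (φ' t) ≤ 0 := fun t ht =>
    (hdesc t ht).trans (by nlinarith [sq_nonneg ‖φ' t‖])
  have hFcont : ContinuousOn (fun u => f (φ u)) (Set.Ici 0) := fun t ht =>
    (hFd t ht).continuousAt.continuousWithinAt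
  have hFanti : AntitoneOn (fun u => f (φ u)) (Set.Ici 0) := by
    apply antitoneOn_of_deriv_nonpos (convex_Ici 0) hFcont
    · intro x hx
      rw [interior_Ici] at hx
      exact (hFd x (Set.mem_Ici.mpr (le_of_lt hx))).differentiableAt.differentiableWithinAt
    · intro x hx
      rw [interior_Ici] at hx
      rw [(hFd x (Set.mem_Ici.mpr hx.le)).deriv]
      exact hD0 x (Set.mem_Ici.mpr hx.le)
  have hbdd : BddBelow ((fun t => f (φ t)) '' Set.Ici (0:ℝ)) := by
    refine ((hK.image hf.continuous).bddBelow).mono ?_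
    rintro _ ⟨t, ht, rfl⟩
    exact ⟨φ t, hmem t ht, rfl⟩
  have hne : ((fun t => f (φ t)) '' Set.Ici (0:ℝ)).Nonempty := ⟨f (φ 0), 0, Set.self_mem_Ici, rfl⟩
  have hlle : ∀ t, (0:ℝ) ≤ t → l ≤ f (φ t) := fun t ht => by
    rw [hl]; exact csInf_le hbdd ⟨t, ht, rfl⟩
  -- choose T₀ where f (φ T₀) < l + δ
  obtain ⟨x, ⟨T₀, hT₀0, rfl⟩, hx⟩ : ∃ x ∈ (fun t => f (φ t)) '' Set.Ici (0:ℝ), x < l + δ := by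
    apply exists_lt_of_csInf_lt hne
    rw [← hl]; linarith
  have hT₀0 : (0:ℝ) ≤ T₀ := hT₀0
  have hδ' : ∀ t, T₀ ≤ t → f (φ t) < l + δ := fun t ht =>
    lt_of_le_of_lt (hFanti hT₀0 (hT₀0.trans ht) ht) hx
  by_cases hpos : ∀ t, T₀ ≤ t → l < f (φ t)
  · -- Main case: f (φ t) > l for all t ≥ T₀
    set H : ℝ → ℝ := fun u => (f (φ u) - l) ^ (1 - θ) with hH
    have hgpos : ∀ t, T₀ ≤ t → 0 < f (φ t) - l := fun t ht => sub_pos.mpr (hpos t ht)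
    have hHd : ∀ t, T₀ ≤ t → HasDerivAt H
        (fderiv ℝ f (φ t) (φ' t) * (1 - θ) * (f (φ t) - l) ^ (1 - θ - 1)) t := by
      intro t ht
      have h1 : HasDerivAt (fun u => f (φ u) - l) (fderiv ℝ f (φ t) (φ' t)) t :=
        (hFd t (hT₀0.trans ht)).sub_const l
      exact h1.rpow_const (Or.inl (ne_of_gt (hgpos t ht)))
    have hHcont : ContinuousOn H (Set.Ici T₀) := fun t ht =>
      (hHd t ht).continuousAt.continuousWithinAt
    have hH0 : ∀ t, T₀ ≤ t → 0 ≤ H t := fun t ht =>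
      Real.rpow_nonneg (hgpos t ht).le _
    have hHanti : AntitoneOn H (Set.Ici T₀) := by
      apply antitoneOn_of_deriv_nonpos (convex_Ici T₀) hHcont
      · intro x hx
        rw [interior_Ici] at hx
        exact (hHd x hx.le).differentiableAt.differentiableWithinAt
      · intro x hx
        rw [interior_Ici] at hx
        rw [(hHd x hx.le).deriv]
        have hP : (0:ℝ) ≤ (f (φ x) - l) ^ (1 - θ - 1) :=
          (Real.rpow_pos_of_pos (hgpos x hx.le) _).le
        have hDneg := hD0 x (hT₀0.trans hx.le)
        nlinarith [mul_nonneg (mul_nonneg (neg_nonneg.mpr hDneg) h1θ.le) hP]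
    set K' : ℝ := (1 - θ) * c * a with hK'
    have hK'pos : 0 < K' := by positivity
    -- key length estimate
    have key : ∀ s t, T₀ ≤ s → s ≤ t → ‖φ t - φ s‖ ≤ (H s - H t) / K' := by
      intro s t hs hst
      have hs0 : (0:ℝ) ≤ s := hT₀0.trans hs
      have hsub : Set.Icc s t ⊆ Set.Ici (0:ℝ) := fun u hu => hs0.trans hu.1
      have est := image_norm_le_of_norm_deriv_right_le_deriv_boundary'
        (f := fun u => φ u - φ s) (f' := φ') (a := s) (b := t)
        (B := fun u => (H s - H u) / K')
        (B' := fun u => -(fderiv ℝ f (φ u) (φ' u) * (1 - θ) * (f (φ u) - l) ^ (1 - θ - 1)) / K')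
        ((hφcont.mono hsub).sub continuousOn_const)
        (fun u hu => ((hderiv u (hs0.trans hu.1)).sub_const (φ s)).hasDerivWithinAt)
        (by simp)
        ((continuousOn_const.sub (hHcont.mono (fun u hu => hs.trans hu.1))).div_const K')
        (fun u hu => (((hHd u (hs.trans hu.1)).const_sub (H s)).div_const K').hasDerivWithinAt)
        ?_
      · simpa using est (Set.right_mem_Icc.mpr hst)
      · intro u hu
        have huT : T₀ ≤ u := hs.trans hu.1
        have hu0 : (0:ℝ) ≤ u := hT₀0.trans huT
        have hg : 0 < f (φ u) - l := hgpos u huT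
        have hLo := hLoj u hu0 (hδ' u huT)
        have hdes := hdesc u hu0
        set N := ‖φ' u‖ with hN
        set G := f (φ u) - l with hG
        set D := fderiv ℝ f (φ u) (φ' u) with hDdef
        have hP : (0:ℝ) < G ^ (-θ) := Real.rpow_pos_of_pos hg _
        have hPQ : G ^ θ * G ^ (-θ) = 1 := by
          rw [← Real.rpow_add hg]; simp
        have hexp : (1 - θ - 1 : ℝ) = -θ := by ring
        rw [hexp, le_div_iff₀ hK'pos]
        have hN0 : (0:ℝ) ≤ N := norm_nonneg _
        have h1 : a * G ^ θ * (N * G ^ (-θ)) ≤ N * (N * G ^ (-θ)) :=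
          mul_le_mul_of_nonneg_right hLo (by positivity)
        have h3 : a * N ≤ N ^ 2 * G ^ (-θ) := by
          have he : a * G ^ θ * (N * G ^ (-θ)) = a * N * (G ^ θ * G ^ (-θ)) := by ring
          rw [he, hPQ, mul_one] at h1
          nlinarith
        have h2 : c * N ^ 2 * G ^ (-θ) ≤ (-D) * G ^ (-θ) :=
          mul_le_mul_of_nonneg_right (by linarith) hP.le
        have h6 : c * (a * N) ≤ (-D) * G ^ (-θ) := by nlinarith
        have h7 := mul_le_mul_of_nonneg_left h6 h1θ.le
        calc N * K' = (1 - θ) * (c * (a * N)) := by rw [hK']; ring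
          _ ≤ (1 - θ) * ((-D) * G ^ (-θ)) := h7
          _ = -(D * (1 - θ) * G ^ (-θ)) := by ring
    -- Cauchy argument
    have hmbdd : BddBelow (H '' Set.Ici T₀) := by
      refine ⟨0, ?_⟩
      rintro _ ⟨t, ht, rfl⟩
      exact hH0 t ht
    set m := sInf (H '' Set.Ici T₀) with hm
    have hmle : ∀ t, T₀ ≤ t → m ≤ H t := fun t ht => csInf_le hmbdd ⟨t, ht, rfl⟩
    have hcauchy : Cauchy (Filter.map φ Filter.atTop) := by
      rw [Metric.cauchy_iff]
      refine ⟨Filter.map_neBot, fun ε hε => ?_⟩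
      obtain ⟨y, ⟨T, hT, rfl⟩, hy⟩ : ∃ y ∈ H '' Set.Ici T₀, y < m + ε * K' := by
        refine exists_lt_of_csInf_lt ⟨H T₀, ⟨T₀, Set.self_mem_Ici, rfl⟩⟩ ?_
        rw [← hm]; nlinarith
      refine ⟨φ '' Set.Ici T, Filter.image_mem_map (Filter.Ici_mem_atTop T), ?_⟩
      have main : ∀ u v, T ≤ u → u ≤ v → dist (φ v) (φ u) < ε := by
        intro u v hu huv
        have h1 := key u v (hT.trans hu) huv
        have h2 : H u ≤ H T := hHanti hT (hT.trans hu) hu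
        have h3 : m ≤ H v := hmle v (hT.trans (hu.trans huv))
        rw [dist_eq_norm]
        have hlt : (H u - H v) / K' < ε := by
          rw [div_lt_iff₀ hK'pos]; linarith
        linarith
      rintro x ⟨u, hu, rfl⟩ y ⟨v, hv, rfl⟩
      rcases le_total u v with h | h
      · rw [dist_comm]; exact main u v hu h
      · exact main v u hv h
    obtain ⟨L, hL⟩ := CompleteSpace.complete hcauchy
    exact ⟨L, hL⟩
  · -- degenerate case: the flow reaches the infimum value and stops
    push_neg at hpos
    obtain ⟨t₁, ht₁, hft₁⟩ := hpos
    have ht₁0 : (0:ℝ) ≤ t₁ := hT₀0.trans ht₁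
    have hFeq : ∀ t, t₁ ≤ t → f (φ t) = l := fun t ht =>
      le_antisymm ((hFanti ht₁0 (ht₁0.trans ht) ht).trans hft₁) (hlle t (ht₁0.trans ht))
    have hφ'0 : ∀ t, t₁ ≤ t → φ' t = 0 := by
      intro t ht
      have h0t : (0:ℝ) ≤ t := ht₁0.trans ht
      have h1 : HasDerivWithinAt (fun u => f (φ u)) (fderiv ℝ f (φ t) (φ' t))
          (Set.Ici t) t := (hFd t h0t).hasDerivWithinAt
      have h2 : HasDerivWithinAt (fun u => f (φ u)) 0 (Set.Ici t) t := by
        refine (hasDerivWithinAt_const t (Set.Ici t) l).congr ?_ (hFeq t ht)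
        intro y hy
        exact hFeq y (ht.trans hy)
      have hDz : fderiv ℝ f (φ t) (φ' t) = 0 := by
        rw [← h1.derivWithin (uniqueDiffOn_Ici t t Set.self_mem_Ici),
          h2.derivWithin (uniqueDiffOn_Ici t t Set.self_mem_Ici)]
      have hd := hdesc t h0t
      rw [hDz] at hd
      have h0 : c * ‖φ' t‖ ^ 2 = 0 :=
        le_antisymm (by linarith) (mul_nonneg hc.le (sq_nonneg _))
      have h00 : ‖φ' t‖ ^ 2 = 0 := by
        rcases mul_eq_zero.mp h0 with h' | h'
        · exact absurd h' hc.ne'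
        · exact h'
      have : ‖φ' t‖ = 0 := by
        have := sq_eq_zero_iff.mp h00
        simpa using this
      exact norm_eq_zero.mp this
    have hφconst : ∀ t, t₁ ≤ t → φ t = φ t₁ := by
      intro t ht
      have hsub : Set.Icc t₁ t ⊆ Set.Ici (0:ℝ) := fun u hu => ht₁0.trans hu.1
      have key := norm_image_sub_le_of_norm_deriv_right_le_segment
        (f := φ) (f' := φ') (a := t₁) (b := t) (C := 0)
        (hφcont.mono hsub)
        (fun u hu => (hderiv u (ht₁0.trans hu.1)).hasDerivWithinAt)
        (fun u hu => by rw [hφ'0 u hu.1, norm_zero])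
      have h := key t (Set.right_mem_Icc.mpr ht)
      rw [zero_mul] at h
      have := le_antisymm h (norm_nonneg _)
      rwa [norm_eq_zero, sub_eq_zero] at this
    refine ⟨φ t₁, Filter.Tendsto.congr' ?_ tendsto_const_nhds⟩
    filter_upwards [Filter.eventually_ge_atTop t₁] with t ht
    exact (hφconst t ht).symm
end

section
/- Let E be a finite-dimensional real inner product space, K ⊆ E a compact set, f : E → ℝ a differentiable function, and c > 0. Let φ : ℝ → E be continuously differentiable on [0, ∞) with φ(t) ∈ K and f′(φ(t))(φ′(t)) ≤ −c·‖φ′(t)‖² for all t ≥ 0. Set l = inf_{t ≥ 0} f(φ(t)). Assume there exist δ > 0, a > 0 and θ ∈ [1/2, 1) such that for every t ≥ 0 with f(φ(t)) < l + δ one has a·(f(φ(t)) − l)^θ ≤ ‖φ′(t)‖. Then there exist constants C > 0 and ε > 0 such that for every t > 0, the function s ↦ ‖φ′(s)‖ is integrable on (t, ∞) and ∫_t^∞ ‖φ′(s)‖ ds ≤ C · t^{−ε}. -/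
open scoped Topology

set_option maxHeartbeats 2000000 in
open MeasureTheory Set Filter in
theorem gradient_flow_integral_tail_bound
    {E : Type*} [NormedAddCommGroup E] [InnerProductSpace ℝ E] [FiniteDimensional ℝ E]
    (K : Set E) (hK : IsCompact K)
    (f : E → ℝ) (hf : Differentiable ℝ f) (c : ℝ) (hc : 0 < c)
    (φ φ' : ℝ → E)
    (hderiv : ∀ t ∈ Set.Ici (0:ℝ), HasDerivAt φ (φ' t) t)
    (hcont : ContinuousOn φ' (Set.Ici 0))
    (hmem : ∀ t ∈ Set.Ici (0:ℝ), φ t ∈ K)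
    (hdesc : ∀ t ∈ Set.Ici (0:ℝ), fderiv ℝ f (φ t) (φ' t) ≤ -c * ‖φ' t‖ ^ 2)
    (l : ℝ) (hl : l = sInf ((fun t => f (φ t)) '' Set.Ici (0:ℝ)))
    (δ a θ : ℝ) (hδ : 0 < δ) (ha : 0 < a) (hθ₁ : 1/2 ≤ θ) (hθ₂ : θ < 1)
    (hLoj : ∀ t ∈ Set.Ici (0:ℝ), f (φ t) < l + δ → a * (f (φ t) - l) ^ θ ≤ ‖φ' t‖) :
    ∃ C : ℝ, 0 < C ∧ ∃ ε : ℝ, 0 < ε ∧ ∀ t : ℝ, 0 < t →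
      MeasureTheory.IntegrableOn (fun s => ‖φ' s‖) (Set.Ioi t) ∧
      ∫ s in Set.Ioi t, ‖φ' s‖ ≤ C * t ^ (-ε) := by
  classical
  set g : ℝ → ℝ := fun t => f (φ t) with hg_def
  set u : ℝ → ℝ := fun t => g t - l with hu_def
  -- derivative of g
  have hgderiv : ∀ t ∈ Set.Ici (0:ℝ), HasDerivAt g (fderiv ℝ f (φ t) (φ' t)) t := by
    intro t ht
    exact (hf (φ t)).hasFDerivAt.comp_hasDerivAt t (hderiv t ht)
  have huderiv : ∀ t ∈ Set.Ici (0:ℝ), HasDerivAt u (fderiv ℝ f (φ t) (φ' t)) t := by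
    intro t ht
    exact (hgderiv t ht).sub_const l
  -- l is a lower bound
  have hbdd : BddBelow ((fun t => f (φ t)) '' Set.Ici (0:ℝ)) := by
    have h1 : IsCompact (f '' K) := hK.image_of_continuousOn hf.continuous.continuousOn
    refine h1.bddBelow.mono ?_
    rintro x ⟨t, ht, rfl⟩
    exact ⟨φ t, hmem t ht, rfl⟩
  have hlg : ∀ t ∈ Set.Ici (0:ℝ), l ≤ g t := by
    intro t ht
    rw [hl]
    exact csInf_le hbdd ⟨t, ht, rfl⟩
  have hunn : ∀ t ∈ Set.Ici (0:ℝ), 0 ≤ u t := fun t ht => sub_nonneg.2 (hlg t ht)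
  -- g antitone
  have hganti : AntitoneOn g (Set.Ici 0) := by
    apply antitoneOn_of_deriv_nonpos (convex_Ici 0)
    · exact fun t ht => (hgderiv t ht).continuousAt.continuousWithinAt
    · intro t ht
      rw [interior_Ici] at ht
      exact ((hgderiv t (Set.mem_Ici.2 (Set.mem_Ioi.1 ht).le)).differentiableAt).differentiableWithinAt
    · intro t ht
      rw [interior_Ici] at ht
      rw [(hgderiv t (Set.mem_Ici.2 (Set.mem_Ioi.1 ht).le)).deriv]
      refine le_trans (hdesc t (Set.mem_Ici.2 (Set.mem_Ioi.1 ht).le)) ?_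
      nlinarith [sq_nonneg ‖φ' t‖]
  have huanti : AntitoneOn u (Set.Ici 0) := fun s hs t ht hst =>
    sub_le_sub_right (hganti hs ht hst) l
  -- modified exponent and delta
  set θ' : ℝ := max θ (3/4) with hθ'_def
  have hθ'a : (3:ℝ)/4 ≤ θ' := le_max_right _ _
  have hθ'b : θ' < 1 := max_lt hθ₂ (by norm_num)
  have hθθ' : θ ≤ θ' := le_max_left _ _
  set δ' : ℝ := min δ 1 with hδ'_def
  have hδ'pos : 0 < δ' := lt_min hδ one_pos
  have hδ'1 : δ' ≤ 1 := min_le_right _ _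
  -- modified Lojasiewicz
  have hLoj' : ∀ t ∈ Set.Ici (0:ℝ), u t < δ' → a * u t ^ θ' ≤ ‖φ' t‖ := by
    intro t ht h
    have h1 : f (φ t) < l + δ := by
      have : u t < δ := lt_of_lt_of_le h (min_le_left _ _)
      simp only [hu_def, hg_def] at this ⊢
      linarith
    refine le_trans ?_ (hLoj t ht h1)
    have hun : 0 ≤ u t := hunn t ht
    rcases eq_or_lt_of_le hun with h0 | h0
    · rw [show f (φ t) - l = u t from rfl, ← h0,
        Real.zero_rpow (by positivity), Real.zero_rpow (by positivity)]
    · have : u t ^ θ' ≤ u t ^ θ :=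
        Real.rpow_le_rpow_of_exponent_ge h0 (le_of_lt (lt_of_lt_of_le h hδ'1)) hθθ'
      have := mul_le_mul_of_nonneg_left this ha.le
      exact this
  -- key descent inequality
  have hdesc2 : ∀ t ∈ Set.Ici (0:ℝ), u t < δ' →
      fderiv ℝ f (φ t) (φ' t) ≤ -(c * a^2) * u t ^ (2*θ') := by
    intro t ht h
    refine le_trans (hdesc t ht) ?_
    have h1 : a * u t ^ θ' ≤ ‖φ' t‖ := hLoj' t ht h
    have h2 : 0 ≤ u t ^ θ' := Real.rpow_nonneg (hunn t ht) _
    have h3 : (a * u t ^ θ')^2 ≤ ‖φ' t‖^2 := by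
      apply sq_le_sq' _ h1
      nlinarith [norm_nonneg (φ' t)]
    have h4 : (u t ^ θ')^2 = u t ^ (2*θ') := by
      rw [← Real.rpow_natCast (u t ^ θ') 2, ← Real.rpow_mul (hunn t ht)]
      norm_num; ring_nf
    rw [mul_pow] at h3
    rw [h4] at h3
    nlinarith [mul_le_mul_of_nonneg_left h3 hc.le]
  -- find T
  have hTex : ∃ t0 ∈ Set.Ici (0:ℝ), g t0 < l + δ' := by
    have hne : ((fun t => f (φ t)) '' Set.Ici (0:ℝ)).Nonempty :=
      ⟨f (φ 0), 0, Set.mem_Ici.2 le_rfl, rfl⟩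
    have hlt : sInf ((fun t => f (φ t)) '' Set.Ici (0:ℝ)) < l + δ' := by
      rw [← hl]; linarith
    obtain ⟨y, ⟨t0, ht0, rfl⟩, hy⟩ := exists_lt_of_csInf_lt hne hlt
    exact ⟨t0, ht0, hy⟩
  obtain ⟨t0, ht0, ht0lt⟩ := hTex
  set T : ℝ := max t0 1 with hT_def
  have hT1 : (1:ℝ) ≤ T := le_max_right _ _
  have hT0 : (0:ℝ) < T := lt_of_lt_of_le one_pos hT1
  have husmall : ∀ t, T ≤ t → u t < δ' := by
    intro t htT
    have h1 : g t ≤ g t0 := hganti ht0 (Set.mem_Ici.2 (hT0.le.trans htT)) (le_trans (le_max_left _ _) htT)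
    simp only [hu_def]
    linarith
  -- continuity of the norm of the derivative at positive points
  have hφ'cont : ∀ s : ℝ, 0 < s → ContinuousAt (fun x => ‖φ' x‖) s := by
    intro s hs
    exact (hcont.continuousAt (Ici_mem_nhds hs)).norm
  have h2θ : (0:ℝ) < 2*θ' - 1 := by linarith
  set κ : ℝ := (2*θ'-1)*(c*a^2) with hκ_def
  have hκ : 0 < κ := mul_pos h2θ (by positivity)
  set p : ℝ := 1/(2*θ'-1) with hp_def
  have hp0 : 0 < p := by positivity
  have hp_mul : (2*θ'-1)*p = 1 := by
    rw [hp_def]; field_simp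
  -- negative powers are antitone
  have hneg_rpow : ∀ x y e : ℝ, 0 < x → x ≤ y → 0 ≤ e → y ^ (-e) ≤ x ^ (-e) := by
    intro x y e hx hxy he
    rw [Real.rpow_neg hx.le, Real.rpow_neg (hx.trans_le hxy).le]
    exact inv_anti₀ (Real.rpow_pos_of_pos hx e) (Real.rpow_le_rpow hx.le hxy he)
  -- decay of u
  have hudecay : ∀ t, T < t → u t ≤ (κ * (t - T)) ^ (-p) := by
    intro t htT
    have htpos : (0:ℝ) < t := hT0.trans htT
    have hbase : 0 < κ * (t - T) := mul_pos hκ (by linarith)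
    rcases eq_or_lt_of_le (hunn t (Set.mem_Ici.2 htpos.le)) with h0 | h0
    · rw [← h0]; exact (Real.rpow_pos_of_pos hbase _).le
    · have hupos : ∀ s ∈ Set.Icc T t, 0 < u s := fun s hs =>
        lt_of_lt_of_le h0 (huanti (Set.mem_Ici.2 (hT0.le.trans hs.1)) (Set.mem_Ici.2 htpos.le) hs.2)
      set w : ℝ → ℝ := fun s => u s ^ (1-2*θ') - κ * s with hw_def
      have hwd : ∀ s ∈ Set.Ioo T t,
          HasDerivAt w (fderiv ℝ f (φ s) (φ' s) * (1-2*θ') * u s ^ (1-2*θ'-1) - κ) s := by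
        intro s hs
        have hsIcc : s ∈ Set.Icc T t := Set.Ioo_subset_Icc_self hs
        have h2 : HasDerivAt (fun x : ℝ => κ * x) κ s := by
          simpa using (hasDerivAt_id s).const_mul κ
        exact ((huderiv s (Set.mem_Ici.2 (hT0.le.trans hsIcc.1))).rpow_const
          (Or.inl (hupos s hsIcc).ne')).sub h2
      have hwmono : MonotoneOn w (Set.Icc T t) := by
        apply monotoneOn_of_deriv_nonneg (convex_Icc T t)
        · intro s hs
          have h1 : ContinuousAt (fun x => u x ^ (1-2*θ')) s :=
            (Real.continuousAt_rpow_const (u s) _ (Or.inl (hupos s hs).ne')).comp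
              ((huderiv s (Set.mem_Ici.2 (hT0.le.trans hs.1))).continuousAt)
          exact (h1.sub (continuousAt_const.mul continuousAt_id)).continuousWithinAt
        · intro s hs
          rw [interior_Icc] at hs
          exact ((hwd s hs).differentiableAt).differentiableWithinAt
        · intro s hs
          rw [interior_Icc] at hs
          have hsIcc : s ∈ Set.Icc T t := Set.Ioo_subset_Icc_self hs
          rw [(hwd s hs).deriv]
          have hX : 0 < u s ^ (-(2*θ')) := Real.rpow_pos_of_pos (hupos s hsIcc) _
          have hY : u s ^ (2*θ') * u s ^ (-(2*θ')) = 1 := by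
            rw [← Real.rpow_add (hupos s hsIcc)]; simp
          have hD : fderiv ℝ f (φ s) (φ' s) ≤ -(c*a^2) * u s ^ (2*θ') :=
            hdesc2 s (Set.mem_Ici.2 (hT0.le.trans hsIcc.1)) (husmall s hsIcc.1)
          rw [show (1-2*θ'-1:ℝ) = -(2*θ') by ring]
          have hDX : fderiv ℝ f (φ s) (φ' s) * u s ^ (-(2*θ')) ≤ -(c*a^2) := by
            calc fderiv ℝ f (φ s) (φ' s) * u s ^ (-(2*θ'))
                ≤ (-(c*a^2) * u s ^ (2*θ')) * u s ^ (-(2*θ')) :=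
                  mul_le_mul_of_nonneg_right hD hX.le
              _ = -(c*a^2) * (u s ^ (2*θ') * u s ^ (-(2*θ'))) := by ring
              _ = -(c*a^2) := by rw [hY]; ring
          have hfin := mul_le_mul_of_nonpos_left hDX (by linarith : (1:ℝ)-2*θ' ≤ 0)
          nlinarith [hfin, hκ_def]
      have hwTt := hwmono (Set.mem_Icc.2 ⟨le_rfl, htT.le⟩) (Set.mem_Icc.2 ⟨htT.le, le_rfl⟩) htT.le
      have hvT : 0 < u T ^ (1-2*θ') :=
        Real.rpow_pos_of_pos (hupos T (Set.mem_Icc.2 ⟨le_rfl, htT.le⟩)) _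
      have h5 : κ*(t-T) ≤ u t ^ (1-2*θ') := by
        simp only [hw_def] at hwTt
        nlinarith [hwTt, hvT]
      have h6 : (u t ^ (1-2*θ')) ^ (-p) = u t := by
        rw [← Real.rpow_mul (le_of_lt h0),
          show (1-2*θ')*(-p) = (2*θ'-1)*p by ring, hp_mul, Real.rpow_one]
      rw [← h6]
      exact hneg_rpow _ _ _ hbase h5 hp0.le
  set K0 : ℝ := c*a*(1-θ') with hK0_def
  have h1θ : (0:ℝ) < 1 - θ' := by linarith
  have hK0 : 0 < K0 := by positivity
  have hii : ∀ x y : ℝ, 0 ≤ x → x ≤ y →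
      IntervalIntegrable (fun s => ‖φ' s‖) MeasureTheory.volume x y := by
    intro x y hx hxy
    apply ContinuousOn.intervalIntegrable
    apply hcont.norm.mono
    rw [Set.uIcc_of_le hxy]
    intro z hz; exact le_trans hx hz.1
  have L1 : ∀ t₁ t₂ : ℝ, T ≤ t₁ → t₁ ≤ t₂ → (∀ s ∈ Set.Ico t₁ t₂, 0 < u s) →
      K0 * ∫ s in t₁..t₂, ‖φ' s‖ ≤ u t₁ ^ (1-θ') := by
    intro t₁ t₂ ht₁ ht₁₂ hpos
    have ht₁pos : (0:ℝ) < t₁ := lt_of_lt_of_le hT0 ht₁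
    rcases eq_or_lt_of_le ht₁₂ with rfl | hlt
    · simp [Real.rpow_nonneg (hunn t₁ (Set.mem_Ici.2 ht₁pos.le))]
    · have hprim : ∀ s ∈ Set.Icc t₁ t₂,
          HasDerivAt (fun x => ∫ y in t₁..x, ‖φ' y‖) ‖φ' s‖ s := by
        intro s hs
        have hspos : (0:ℝ) < s := lt_of_lt_of_le ht₁pos hs.1
        exact intervalIntegral.integral_hasDerivAt_right (hii t₁ s ht₁pos.le hs.1)
          (ContinuousOn.stronglyMeasurableAtFilter isOpen_Ioi
            (hcont.norm.mono Set.Ioi_subset_Ici_self) s hspos)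
          (hφ'cont s hspos)
      have hψanti : AntitoneOn
          (fun s => u s ^ (1-θ') + K0 * ∫ x in t₁..s, ‖φ' x‖) (Set.Icc t₁ t₂) := by
        apply antitoneOn_of_deriv_nonpos (convex_Icc _ _)
        · intro s hs
          have h1 : ContinuousAt (fun x => u x ^ (1-θ')) s :=
            (Real.continuousAt_rpow_const (u s) _ (Or.inr (by linarith))).comp
              ((huderiv s (Set.mem_Ici.2 (le_trans ht₁pos.le hs.1))).continuousAt)
          exact (h1.add (continuousAt_const.mul (hprim s hs).continuousAt)).continuousWithinAt
        · intro s hs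
          rw [interior_Icc] at hs
          have hsIco : s ∈ Set.Ico t₁ t₂ := ⟨hs.1.le, hs.2⟩
          have hd : HasDerivAt (fun x => u x ^ (1-θ') + K0 * ∫ y in t₁..x, ‖φ' y‖)
              (fderiv ℝ f (φ s) (φ' s) * (1-θ') * u s ^ (1-θ'-1) + K0 * ‖φ' s‖) s :=
            ((huderiv s (Set.mem_Ici.2 (le_trans ht₁pos.le hs.1.le))).rpow_const
              (p := 1-θ') (Or.inl (hpos s hsIco).ne')).add
              ((hprim s (Set.Ioo_subset_Icc_self hs)).const_mul K0)
          exact hd.differentiableAt.differentiableWithinAt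
        · intro s hs
          rw [interior_Icc] at hs
          have hsIco : s ∈ Set.Ico t₁ t₂ := ⟨hs.1.le, hs.2⟩
          have hsmem : s ∈ Set.Ici (0:ℝ) := Set.mem_Ici.2 (le_trans ht₁pos.le hs.1.le)
          have hd : HasDerivAt (fun x => u x ^ (1-θ') + K0 * ∫ y in t₁..x, ‖φ' y‖)
              (fderiv ℝ f (φ s) (φ' s) * (1-θ') * u s ^ (1-θ'-1) + K0 * ‖φ' s‖) s :=
            ((huderiv s hsmem).rpow_const (p := 1-θ')
              (Or.inl (hpos s hsIco).ne')).add
              ((hprim s (Set.Ioo_subset_Icc_self hs)).const_mul K0)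
          rw [hd.deriv, show ((1:ℝ)-θ'-1) = -θ' by ring]
          have hX : 0 < u s ^ (-θ') := Real.rpow_pos_of_pos (hpos s hsIco) _
          have hXθ : u s ^ θ' * u s ^ (-θ') = 1 := by
            rw [← Real.rpow_add (hpos s hsIco)]; simp
          have hLs : a * u s ^ θ' ≤ ‖φ' s‖ :=
            hLoj' s hsmem (husmall s (le_trans ht₁ hs.1.le))
          have hDs : fderiv ℝ f (φ s) (φ' s) ≤ -c * ‖φ' s‖^2 := hdesc s hsmem
          have hXN : a ≤ u s ^ (-θ') * ‖φ' s‖ := by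
            calc a = (a * u s ^ θ') * u s ^ (-θ') := by
                  rw [mul_assoc, hXθ]; ring
              _ ≤ ‖φ' s‖ * u s ^ (-θ') := mul_le_mul_of_nonneg_right hLs hX.le
              _ = u s ^ (-θ') * ‖φ' s‖ := by ring
          have hstep : fderiv ℝ f (φ s) (φ' s) * (1-θ') * u s ^ (-θ') ≤
              (-c * ‖φ' s‖^2) * (1-θ') * u s ^ (-θ') :=
            mul_le_mul_of_nonneg_right (mul_le_mul_of_nonneg_right hDs h1θ.le) hX.le
          have hstep2 := mul_le_mul_of_nonneg_left hXN
            (mul_nonneg (mul_nonneg hc.le h1θ.le) (norm_nonneg (φ' s)))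
          nlinarith [hstep, hstep2, hK0_def]
      have hfin := hψanti (Set.mem_Icc.2 ⟨le_rfl, ht₁₂⟩) (Set.mem_Icc.2 ⟨ht₁₂, le_rfl⟩) ht₁₂
      simp only [intervalIntegral.integral_same, mul_zero, add_zero] at hfin
      have := Real.rpow_nonneg (hunn t₂ (Set.mem_Ici.2 (le_trans ht₁pos.le ht₁₂))) (1-θ')
      linarith
  -- main length bound, handling possible zeros of u
  have hlen : ∀ t, T ≤ t → ∀ b, t ≤ b → ∫ s in t..b, ‖φ' s‖ ≤ u t ^ (1-θ') / K0 := by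
    intro t ht b htb
    have htpos : (0:ℝ) < t := lt_of_lt_of_le hT0 ht
    rw [le_div_iff₀ hK0]
    by_cases hZ : ∀ s ∈ Set.Icc t b, 0 < u s
    · have := L1 t b ht htb (fun s hs => hZ s ⟨hs.1, hs.2.le⟩)
      linarith
    · push_neg at hZ
      obtain ⟨z, hzIcc, hz0⟩ := hZ
      have hucont : ContinuousOn u (Set.Icc t b) := fun s hs =>
        ((huderiv s (Set.mem_Ici.2 (le_trans htpos.le hs.1))).continuousAt).continuousWithinAt
      have hZclosed : IsClosed (Set.Icc t b ∩ u ⁻¹' {0}) :=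
        hucont.preimage_isClosed_of_isClosed isClosed_Icc isClosed_singleton
      have hZne : (Set.Icc t b ∩ u ⁻¹' {0}).Nonempty := by
        refine ⟨z, hzIcc, ?_⟩
        have := hunn z (Set.mem_Ici.2 (le_trans htpos.le hzIcc.1))
        simp only [Set.mem_preimage, Set.mem_singleton_iff]
        linarith
      have hZbdd : BddBelow (Set.Icc t b ∩ u ⁻¹' {0}) :=
        bddBelow_Icc.mono Set.inter_subset_left
      set s₀ := sInf (Set.Icc t b ∩ u ⁻¹' {0}) with hs₀_def
      obtain ⟨⟨hts₀, hs₀b⟩, hu₀⟩ := hZclosed.csInf_mem hZne hZbdd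
      have hu₀' : u s₀ = 0 := hu₀
      have hposIco : ∀ s ∈ Set.Ico t s₀, 0 < u s := by
        intro s hsm
        rcases (hunn s (Set.mem_Ici.2 (le_trans htpos.le hsm.1))).lt_or_eq with h | h
        · exact h
        · exfalso
          have hmem : s ∈ Set.Icc t b ∩ u ⁻¹' {0} :=
            ⟨⟨hsm.1, le_trans hsm.2.le hs₀b⟩, h.symm⟩
          exact absurd (csInf_le hZbdd hmem) (not_le.2 hsm.2)
      have hL1 := L1 t s₀ ht hts₀ hposIco
      have huz : ∀ s, s₀ ≤ s → u s = 0 := by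
        intro s hss
        have h1 : u s ≤ u s₀ :=
          huanti (Set.mem_Ici.2 (le_trans htpos.le hts₀))
            (Set.mem_Ici.2 (le_trans (le_trans htpos.le hts₀) hss)) hss
        have h2 := hunn s (Set.mem_Ici.2 (le_trans (le_trans htpos.le hts₀) hss))
        rw [hu₀'] at h1
        linarith
      have hφz : ∀ s, s₀ < s → φ' s = 0 := by
        intro s hss
        have hspos : (0:ℝ) < s := lt_of_le_of_lt (le_trans htpos.le hts₀) hss
        have hEq : u =ᶠ[nhds s] fun _ => (0:ℝ) := by
          filter_upwards [Ioi_mem_nhds hss] with x hx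
          exact huz x (le_of_lt hx)
        have h0 : HasDerivAt u 0 s :=
          (hasDerivAt_const s (0:ℝ)).congr_of_eventuallyEq hEq
        have huniq : fderiv ℝ f (φ s) (φ' s) = 0 :=
          (huderiv s (Set.mem_Ici.2 hspos.le)).unique h0
        have hds := hdesc s (Set.mem_Ici.2 hspos.le)
        rw [huniq] at hds
        by_contra hne
        have hNpos : 0 < ‖φ' s‖ := norm_pos_iff.2 hne
        nlinarith [hds, mul_pos hc (mul_pos hNpos hNpos)]
      have hint0 : ∫ s in s₀..b, ‖φ' s‖ = 0 := by
        rw [intervalIntegral.integral_of_le hs₀b,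
          MeasureTheory.setIntegral_congr_fun measurableSet_Ioc
            (g := fun _ => (0:ℝ)) (fun x hx => by simp [hφz x hx.1])]
        simp
      have hsplit := intervalIntegral.integral_add_adjacent_intervals
        (hii t s₀ htpos.le hts₀) (hii s₀ b (le_trans htpos.le hts₀) hs₀b)
      rw [← hsplit, hint0, add_zero]
      linarith
  -- integrability on tails
  have hIio : ∀ t, T ≤ t → MeasureTheory.IntegrableOn (fun s => ‖φ' s‖) (Set.Ioi t) := by
    intro t ht
    have htpos : (0:ℝ) < t := lt_of_lt_of_le hT0 ht
    apply MeasureTheory.integrableOn_Ioi_of_intervalIntegral_norm_bounded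
      (u t ^ (1-θ') / K0) t (b := fun i : ℝ => i) (l := atTop) ?_ tendsto_id ?_
    · intro i
      by_cases h : t ≤ i
      · exact (hii t i htpos.le h).1
      · rw [Set.Ioc_eq_empty (by intro hlt; exact h hlt.le)]
        exact MeasureTheory.integrableOn_empty
    · filter_upwards [eventually_ge_atTop t] with i hi
      simpa only [norm_norm] using hlen t ht i hi
  have hIbound : ∀ t, T ≤ t → ∫ s in Set.Ioi t, ‖φ' s‖ ≤ u t ^ (1-θ') / K0 := by
    intro t ht
    refine le_of_tendsto (MeasureTheory.intervalIntegral_tendsto_integral_Ioi t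
      (hIio t ht) (tendsto_id (α := ℝ))) ?_
    filter_upwards [eventually_ge_atTop t] with i hi
    exact hlen t ht i hi
  -- decay of the tail for large t
  set q : ℝ := p*(1-θ') with hq_def
  have hq : 0 < q := mul_pos hp0 h1θ
  set M : ℝ := (κ/2) ^ (-q) / K0 with hM_def
  have hM : 0 < M := div_pos (Real.rpow_pos_of_pos (by positivity) _) hK0
  have htail : ∀ t, 2*T ≤ t → ∫ s in Set.Ioi t, ‖φ' s‖ ≤ M * t ^ (-q) := by
    intro t h2t
    have hTt : T ≤ t := by linarith
    have htT : T < t := by linarith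
    have htpos : (0:ℝ) < t := lt_of_lt_of_le hT0 hTt
    refine le_trans (hIbound t hTt) ?_
    have h1 : u t ≤ (κ * (t - T)) ^ (-p) := hudecay t htT
    have hbase : 0 < κ * (t - T) := mul_pos hκ (by linarith)
    have h2 : u t ^ (1-θ') ≤ ((κ * (t - T)) ^ (-p)) ^ (1-θ') :=
      Real.rpow_le_rpow (hunn t (Set.mem_Ici.2 htpos.le)) h1 h1θ.le
    have h3 : ((κ * (t - T)) ^ (-p)) ^ (1-θ') = (κ * (t - T)) ^ (-q) := by
      rw [← Real.rpow_mul hbase.le, show (-p)*(1-θ') = -q by rw [hq_def]; ring]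
    have hb2 : 0 < κ/2 * t := by positivity
    have h4 : (κ * (t - T)) ^ (-q) ≤ (κ/2 * t) ^ (-q) := by
      refine hneg_rpow _ _ _ hb2 ?_ hq.le
      nlinarith [mul_nonneg hκ.le (show (0:ℝ) ≤ t/2 - T by linarith)]
    have h5 : (κ/2 * t) ^ (-q) = (κ/2) ^ (-q) * t ^ (-q) :=
      Real.mul_rpow (by positivity) htpos.le
    have h6 : u t ^ (1-θ') ≤ (κ/2) ^ (-q) * t ^ (-q) :=
      calc u t ^ (1-θ') ≤ ((κ * (t - T)) ^ (-p)) ^ (1-θ') := h2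
        _ = (κ * (t - T)) ^ (-q) := h3
        _ ≤ (κ/2 * t) ^ (-q) := h4
        _ = (κ/2) ^ (-q) * t ^ (-q) := h5
    rw [show M * t ^ (-q) = ((κ/2) ^ (-q) * t ^ (-q))/K0 by rw [hM_def]; ring]
    gcongr
  -- assemble the constants
  set B : ℝ := ∫ s in Set.Ioc 0 (2*T), ‖φ' s‖ with hB_def
  have hBint : MeasureTheory.IntegrableOn (fun s => ‖φ' s‖) (Set.Ioc 0 (2*T)) :=
    (hii 0 (2*T) le_rfl (by linarith)).1
  have hBnn : 0 ≤ B :=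
    MeasureTheory.setIntegral_nonneg measurableSet_Ioc (fun x _ => norm_nonneg _)
  set B' : ℝ := B + M * (2*T) ^ (-q) with hB'_def
  have hB'nn : 0 ≤ B' :=
    add_nonneg hBnn (mul_nonneg hM.le (Real.rpow_nonneg (by linarith) _))
  refine ⟨max M ((B' + 1) * (2*T) ^ q), lt_of_lt_of_le hM (le_max_left _ _), q, hq, ?_⟩
  intro t htpos
  by_cases h2T : 2*T ≤ t
  · refine ⟨hIio t (by linarith), ?_⟩
    exact le_trans (htail t h2T)
      (mul_le_mul_of_nonneg_right (le_max_left _ _) (Real.rpow_nonneg htpos.le _))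
  · push_neg at h2T
    have hsplitset : Set.Ioc t (2*T) ∪ Set.Ioi (2*T) = Set.Ioi t :=
      Set.Ioc_union_Ioi_eq_Ioi h2T.le
    have hint1 : MeasureTheory.IntegrableOn (fun s => ‖φ' s‖) (Set.Ioc t (2*T)) :=
      (hii t (2*T) htpos.le h2T.le).1
    have hint2 : MeasureTheory.IntegrableOn (fun s => ‖φ' s‖) (Set.Ioi (2*T)) :=
      hIio (2*T) (by linarith)
    have hint : MeasureTheory.IntegrableOn (fun s => ‖φ' s‖) (Set.Ioi t) := by
      rw [← hsplitset]; exact hint1.union hint2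
    refine ⟨hint, ?_⟩
    have e1 : ∫ s in Set.Ioi t, ‖φ' s‖ =
        (∫ s in Set.Ioc t (2*T), ‖φ' s‖) + ∫ s in Set.Ioi (2*T), ‖φ' s‖ := by
      rw [← hsplitset]
      exact MeasureTheory.setIntegral_union (Set.Ioc_disjoint_Ioi le_rfl)
        measurableSet_Ioi hint1 hint2
    have e2 : ∫ s in Set.Ioc t (2*T), ‖φ' s‖ ≤ B := by
      rw [hB_def]
      exact MeasureTheory.setIntegral_mono_set hBint
        (Filter.Eventually.of_forall fun x => norm_nonneg _)
        (HasSubset.Subset.eventuallyLE (Set.Ioc_subset_Ioc_left htpos.le))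
    have e3 : ∫ s in Set.Ioi (2*T), ‖φ' s‖ ≤ M * (2*T) ^ (-q) := htail (2*T) le_rfl
    have h2Tq : ((2*T:ℝ)) ^ q * (2*T) ^ (-q) = 1 := by
      rw [Real.rpow_neg (by linarith : (0:ℝ) ≤ 2*T)]
      exact mul_inv_cancel₀ (ne_of_gt (Real.rpow_pos_of_pos (by linarith) _))
    have e5 : B' ≤ ((B'+1) * (2*T) ^ q) * (2*T) ^ (-q) := by
      rw [mul_assoc, h2Tq, mul_one]
      linarith
    have e6 : ((B'+1) * (2*T) ^ q) * (2*T) ^ (-q) ≤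
        (max M ((B'+1) * (2*T) ^ q)) * t ^ (-q) :=
      mul_le_mul (le_max_right _ _) (hneg_rpow t (2*T) q htpos h2T.le hq.le)
        (Real.rpow_nonneg (by linarith) _) (lt_of_lt_of_le hM (le_max_left _ _)).le
    rw [e1]
    linarith [hB'_def]
end

section
/- Let E be a finite-dimensional real inner product space, U ⊆ E an open set, K ⊆ E a compact set, G : E → E a continuous map, f : E → ℝ a differentiable function, and constants c > 0, a > 0, δ > 0, θ ∈ [1/2, 1), l ∈ ℝ. Let Φ : E → ℝ → E be such that: for every b ∈ U, Φ(b, 0) = b, the curve t ↦ Φ(b, t) has derivative −G(Φ(b, t)) at every t ≥ 0, and Φ(b, t) ∈ K for all t ≥ 0; and for every t ≥ 0 the map b ↦ Φ(b, t) is continuous on U. Assume that for every x ∈ K: f′(x)(G(x)) ≥ c·‖G(x)‖², f(x) ≥ l, and if f(x) < l + δ then a·(f(x) − l)^θ ≤ ‖G(x)‖. Let b₀ ∈ U be such that f(Φ(b₀, t)) → l as t → +∞. Then there is a neighborhood U′ ⊆ U of b₀ such that for every b ∈ U′ the limit L(b) = lim_{t → +∞} Φ(b, t) exists in E, and the map b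 ↦ L(b) is continuous at b₀. -/
open scoped Topology
open Set Filter

private lemma core_estimate {E : Type*} [NormedAddCommGroup E] [NormedSpace ℝ E]
    {G : E → E} {f : E → ℝ} (hf : Differentiable ℝ f) {c a θ l : ℝ}
    (hc : 0 < c) (ha : 0 < a) (hθ₂ : θ < 1)
    {φ : ℝ → E}
    (hd : ∀ t ∈ Set.Ici (0:ℝ), HasDerivAt φ (-G (φ t)) t)
    (hgs : ∀ t ∈ Set.Ici (0:ℝ), c * ‖G (φ t)‖^2 ≤ fderiv ℝ f (φ t) (G (φ t)))
    {s e : ℝ} (hs : 0 ≤ s) (hse : s ≤ e)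
    (hLoj : ∀ r ∈ Set.Ico s e, a * (f (φ r) - l)^θ ≤ ‖G (φ r)‖)
    (hpos : ∀ r ∈ Set.Ico s e, 0 < f (φ r) - l) :
    ‖φ e - φ s‖ ≤ ((1-θ)*c*a)⁻¹ *
      ((f (φ s) - l)^(1-θ) - (f (φ e) - l)^(1-θ)) := by
  set M : ℝ := ((1-θ)*c*a)⁻¹ with hM
  have hθ' : (0:ℝ) < 1 - θ := by linarith
  set h : ℝ → ℝ := fun r => f (φ r) - l with hh
  have hD : ∀ t ∈ Set.Ici (0:ℝ), HasDerivAt h (-(fderiv ℝ f (φ t) (G (φ t)))) t := by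
    intro t ht
    have h1 := (hf (φ t)).hasFDerivAt.comp_hasDerivAt t (hd t ht)
    have h2 : (fderiv ℝ f (φ t)) (-G (φ t)) = -(fderiv ℝ f (φ t) (G (φ t))) := by
      simp
    rw [h2] at h1
    simpa [hh] using h1.sub_const l
  set u : ℝ → E := fun r => φ r - φ s with hu
  set B : ℝ → ℝ := fun r => M * (h s ^ (1-θ) - h r ^ (1-θ)) with hB
  set B' : ℝ → ℝ := fun r => M * (0 - (1-θ) * h r ^ (1-θ-1) *
      (-(fderiv ℝ f (φ r) (G (φ r))))) with hB'
  have hr0 : ∀ r ∈ Set.Icc s e, (0:ℝ) ≤ r := fun r hr => hs.trans hr.1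
  have hucont : ContinuousOn u (Set.Icc s e) := fun r hr =>
    (((hd r (hr0 r hr)).continuousAt).sub continuousAt_const).continuousWithinAt
  have hu' : ∀ r ∈ Set.Ico s e, HasDerivWithinAt u (-G (φ r)) (Set.Ici r) r :=
    fun r hr => (((hd r (hr0 r ⟨hr.1, hr.2.le⟩)).sub_const (φ s))).hasDerivWithinAt
  have hBcont : ContinuousOn B (Set.Icc s e) := by
    intro r hr
    exact (continuousAt_const.mul (continuousAt_const.sub
      (((hD r (hr0 r hr)).continuousAt).rpow_const (Or.inr hθ'.le)))).continuousWithinAt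
  have hB'deriv : ∀ r ∈ Set.Ico s e, HasDerivWithinAt B (B' r) (Set.Ici r) r := by
    intro r hr
    have hpr := hpos r hr
    have h1 : HasDerivAt (fun x : ℝ => x ^ (1-θ)) ((1-θ) * h r ^ (1-θ-1)) (h r) :=
      Real.hasDerivAt_rpow_const (Or.inl hpr.ne')
    have h2 : HasDerivAt (fun x => h x ^ (1-θ))
        ((1-θ) * h r ^ (1-θ-1) * (-(fderiv ℝ f (φ r) (G (φ r))))) r :=
      h1.comp r (hD r (hr0 r ⟨hr.1, hr.2.le⟩))
    have h3 := ((hasDerivAt_const r (h s ^ (1-θ))).sub h2).const_mul M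
    exact h3.hasDerivWithinAt
  have bound : ∀ r ∈ Set.Ico s e, ‖-G (φ r)‖ ≤ B' r := by
    intro r hr
    have hpr := hpos r hr
    set g := ‖G (φ r)‖ with hg
    have hg0 : 0 ≤ g := norm_nonneg _
    have hF : c * g^2 ≤ fderiv ℝ f (φ r) (G (φ r)) := hgs r (hr0 r ⟨hr.1, hr.2.le⟩)
    have hLg : a * h r ^ θ ≤ g := hLoj r hr
    have hq : (0:ℝ) < h r ^ θ := Real.rpow_pos_of_pos hpr θ
    have hexp : h r ^ (1-θ-1) = (h r ^ θ)⁻¹ := by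
      rw [show (1-θ-1 : ℝ) = -θ by ring, Real.rpow_neg hpr.le]
    have hBval : B' r = (fderiv ℝ f (φ r) (G (φ r))) / ((c*a) * h r ^ θ) := by
      simp only [hB', hM]
      rw [hexp]
      field_simp
      ring
    rw [norm_neg, hBval, le_div_iff₀ (by positivity)]
    nlinarith [mul_le_mul_of_nonneg_left hLg hg0]
  have ha0 : ‖u s‖ ≤ B s := by simp [hu, hB]
  have := image_norm_le_of_norm_deriv_right_le_deriv_boundary' hucont hu' ha0 hBcont
    hB'deriv bound (Set.right_mem_Icc.mpr hse)
  simpa [hu, hB, hh] using this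

private lemma flow_estimate {E : Type*} [NormedAddCommGroup E] [NormedSpace ℝ E]
    {G : E → E} (hG : Continuous G) {f : E → ℝ} (hf : Differentiable ℝ f)
    {c a δ θ l : ℝ} (hc : 0 < c) (ha : 0 < a) (hθ₂ : θ < 1)
    {φ : ℝ → E}
    (hd : ∀ t ∈ Set.Ici (0:ℝ), HasDerivAt φ (-G (φ t)) t)
    (hgs : ∀ t ∈ Set.Ici (0:ℝ), c * ‖G (φ t)‖^2 ≤ fderiv ℝ f (φ t) (G (φ t)))
    (hlow : ∀ t ∈ Set.Ici (0:ℝ), l ≤ f (φ t))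
    (hLojG : ∀ t ∈ Set.Ici (0:ℝ), f (φ t) - l < δ → a * (f (φ t) - l)^θ ≤ ‖G (φ t)‖)
    {s t : ℝ} (hs : 0 ≤ s) (hst : s ≤ t) (hδs : f (φ s) - l < δ) :
    ‖φ t - φ s‖ ≤ ((1-θ)*c*a)⁻¹ *
      ((f (φ s) - l)^(1-θ) - (f (φ t) - l)^(1-θ)) := by
  have hθ' : (0:ℝ) < 1 - θ := by linarith
  set h : ℝ → ℝ := fun r => f (φ r) - l with hh
  have hD : ∀ r ∈ Set.Ici (0:ℝ), HasDerivAt h (-(fderiv ℝ f (φ r) (G (φ r)))) r := by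
    intro r hr
    have h1 := (hf (φ r)).hasFDerivAt.comp_hasDerivAt r (hd r hr)
    have h2 : (fderiv ℝ f (φ r)) (-G (φ r)) = -(fderiv ℝ f (φ r) (G (φ r))) := by simp
    rw [h2] at h1
    simpa [hh] using h1.sub_const l
  have hanti : AntitoneOn h (Set.Ici 0) := by
    apply antitoneOn_of_deriv_nonpos (convex_Ici 0)
    · exact fun r hr => (hD r hr).continuousAt.continuousWithinAt
    · rw [interior_Ici]
      exact fun r hr => (hD r (Set.mem_Ici.mpr (le_of_lt (Set.mem_Ioi.mp hr)))).differentiableAt.differentiableWithinAt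
    · rw [interior_Ici]
      intro r hr
      rw [(hD r (Set.mem_Ici.mpr (le_of_lt (Set.mem_Ioi.mp hr)))).deriv]
      have h1 := hgs r (Set.mem_Ici.mpr (le_of_lt (Set.mem_Ioi.mp hr)))
      have h2 : (0:ℝ) ≤ c * ‖G (φ r)‖^2 := by positivity
      linarith
  have hmemI : ∀ r, s ≤ r → r ∈ Set.Ici (0:ℝ) := fun r hr => hs.trans hr
  have hδr : ∀ r, s ≤ r → h r < δ := fun r hr =>
    lt_of_le_of_lt (hanti hs (hmemI r hr) hr) hδs
  have hnonneg : ∀ r, 0 ≤ r → 0 ≤ h r := fun r hr => sub_nonneg.mpr (hlow r hr)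
  have hLoj' : ∀ r, s ≤ r → a * h r ^ θ ≤ ‖G (φ r)‖ := fun r hr =>
    hLojG r (hmemI r hr) (hδr r hr)
  by_cases hZ : ∃ r ∈ Set.Icc s t, h r = 0
  · set Z : Set ℝ := Set.Icc s t ∩ h ⁻¹' {0} with hZdef
    have hZne : Z.Nonempty := by
      obtain ⟨r, hr1, hr2⟩ := hZ
      exact ⟨r, hr1, hr2⟩
    have hZcl : IsClosed Z := by
      apply ContinuousOn.preimage_isClosed_of_isClosed _ isClosed_Icc isClosed_singleton
      exact fun r hr => (hD r (hmemI r hr.1)).continuousAt.continuousWithinAt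
    have hZbdd : BddBelow Z := ⟨s, fun x hx => hx.1.1⟩
    set τ := sInf Z with hτ
    have hτZ : τ ∈ Z := hZcl.csInf_mem hZne hZbdd
    have hτs : s ≤ τ := hτZ.1.1
    have hτt : τ ≤ t := hτZ.1.2
    have hτ0 : h τ = 0 := hτZ.2
    have hzero : ∀ r, τ ≤ r → h r = 0 := fun r hr =>
      le_antisymm (hτ0 ▸ hanti (hmemI τ hτs) (hmemI r (hτs.trans hr)) hr)
        (hnonneg r ((hs.trans hτs).trans hr))
    have hGzero : ∀ r, τ < r → G (φ r) = 0 := by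
      intro r hr
      have h1 : HasDerivAt h 0 r := by
        apply (hasDerivAt_const r (0:ℝ)).congr_of_eventuallyEq
        filter_upwards [Ioi_mem_nhds hr] with x hx
        exact hzero x (le_of_lt hx)
      have h2 := (hD r (hmemI r (hτs.trans hr.le))).unique h1
      have h3 := hgs r (hmemI r (hτs.trans hr.le))
      have h4 : ‖G (φ r)‖^2 = 0 := le_antisymm (by nlinarith) (sq_nonneg _)
      exact norm_eq_zero.mp ((pow_eq_zero_iff two_ne_zero).mp h4)
    have hGτ : G (φ τ) = 0 := by
      have hcw : ContinuousWithinAt (fun r => G (φ r)) (Set.Ioi τ) τ :=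
        (hG.continuousAt.comp (hd τ (hmemI τ hτs)).continuousAt).continuousWithinAt
      have hev : (fun r => G (φ r)) =ᶠ[𝓝[>] τ] (fun _ => (0:E)) := by
        filter_upwards [self_mem_nhdsWithin] with x hx
        exact hGzero x hx
      have h2 : Filter.Tendsto (fun r => G (φ r)) (𝓝[>] τ) (𝓝 (0:E)) :=
        Filter.Tendsto.congr' hev.symm tendsto_const_nhds
      exact tendsto_nhds_unique hcw.tendsto h2
    have hconst : φ t = φ τ := by
      have hC : ∀ x ∈ Set.Icc τ t, HasDerivWithinAt φ (-G (φ x)) (Set.Icc τ t) x :=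
        fun x hx => (hd x (hmemI x (hτs.trans hx.1))).hasDerivWithinAt
      have hbd : ∀ x ∈ Set.Icc τ t, ‖-G (φ x)‖ ≤ 0 := by
        intro x hx
        rcases eq_or_lt_of_le hx.1 with heq | hlt
        · simp [← heq, hGτ]
        · simp [hGzero x hlt]
      have hle := (convex_Icc τ t).norm_image_sub_le_of_norm_hasDerivWithin_le hC hbd
        (Set.left_mem_Icc.mpr hτt) (Set.right_mem_Icc.mpr hτt)
      have h0 : ‖φ t - φ τ‖ ≤ 0 := by simpa using hle
      exact sub_eq_zero.mp (norm_eq_zero.mp (le_antisymm h0 (norm_nonneg _)))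
    have hcore := core_estimate hf hc ha hθ₂ hd hgs hs hτs
      (fun r hr => hLoj' r hr.1)
      (fun r hr => lt_of_le_of_ne (hnonneg r (hs.trans hr.1))
        (fun heq => (not_le.mpr hr.2) (csInf_le hZbdd ⟨⟨hr.1, hr.2.le.trans hτt⟩, heq.symm⟩)))
    have hht : h t = 0 := hzero t hτt
    have h0r : (0:ℝ) ^ (1-θ) = 0 := Real.zero_rpow (ne_of_gt hθ')
    calc ‖φ t - φ s‖ = ‖φ τ - φ s‖ := by rw [hconst]
      _ ≤ ((1-θ)*c*a)⁻¹ * ((f (φ s) - l)^(1-θ) - (f (φ τ) - l)^(1-θ)) := hcore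
      _ = ((1-θ)*c*a)⁻¹ * ((f (φ s) - l)^(1-θ) - (f (φ t) - l)^(1-θ)) := by
          rw [show f (φ τ) - l = h τ from rfl, show f (φ t) - l = h t from rfl, hτ0, hht]
  · push_neg at hZ
    exact core_estimate hf hc ha hθ₂ hd hgs hs hst
      (fun r hr => hLoj' r hr.1)
      (fun r hr => lt_of_le_of_ne (hnonneg r (hs.trans hr.1))
        (fun heq => hZ r ⟨hr.1, hr.2.le⟩ heq.symm))

private lemma flow_antitone {E : Type*} [NormedAddCommGroup E] [NormedSpace ℝ E]
    {G : E → E} {f : E → ℝ} (hf : Differentiable ℝ f) {c : ℝ} (hc : 0 < c) {l : ℝ}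
    {φ : ℝ → E}
    (hd : ∀ t ∈ Set.Ici (0:ℝ), HasDerivAt φ (-G (φ t)) t)
    (hgs : ∀ t ∈ Set.Ici (0:ℝ), c * ‖G (φ t)‖^2 ≤ fderiv ℝ f (φ t) (G (φ t))) :
    AntitoneOn (fun t => f (φ t) - l) (Set.Ici 0) := by
  have hD : ∀ r ∈ Set.Ici (0:ℝ), HasDerivAt (fun t => f (φ t) - l)
      (-(fderiv ℝ f (φ r) (G (φ r)))) r := by
    intro r hr
    have h1 := (hf (φ r)).hasFDerivAt.comp_hasDerivAt r (hd r hr)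
    have h2 : (fderiv ℝ f (φ r)) (-G (φ r)) = -(fderiv ℝ f (φ r) (G (φ r))) := by simp
    rw [h2] at h1
    simpa using h1.sub_const l
  apply antitoneOn_of_deriv_nonpos (convex_Ici 0)
  · exact fun r hr => (hD r hr).continuousAt.continuousWithinAt
  · rw [interior_Ici]
    exact fun r hr => (hD r (Set.mem_Ici.mpr (le_of_lt (Set.mem_Ioi.mp hr)))).differentiableAt.differentiableWithinAt
  · rw [interior_Ici]
    intro r hr
    rw [(hD r (Set.mem_Ici.mpr (le_of_lt (Set.mem_Ioi.mp hr)))).deriv]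
    have h1 := hgs r (Set.mem_Ici.mpr (le_of_lt (Set.mem_Ioi.mp hr)))
    have h2 : (0:ℝ) ≤ c * ‖G (φ r)‖^2 := by positivity
    linarith

theorem gradient_flow_limit_continuous
    {E : Type*} [NormedAddCommGroup E] [InnerProductSpace ℝ E] [FiniteDimensional ℝ E]
    (U : Set E) (hU : IsOpen U) (K : Set E) (hK : IsCompact K)
    (G : E → E) (hG : Continuous G) (f : E → ℝ) (hf : Differentiable ℝ f)
    (c a δ θ l : ℝ) (hc : 0 < c) (ha : 0 < a) (hδ : 0 < δ)
    (hθ₁ : 1/2 ≤ θ) (hθ₂ : θ < 1)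
    (Φ : E → ℝ → E)
    (h0 : ∀ b ∈ U, Φ b 0 = b)
    (hderiv : ∀ b ∈ U, ∀ t ∈ Set.Ici (0:ℝ), HasDerivAt (Φ b) (-G (Φ b t)) t)
    (hmem : ∀ b ∈ U, ∀ t ∈ Set.Ici (0:ℝ), Φ b t ∈ K)
    (hcontb : ∀ t ∈ Set.Ici (0:ℝ), ContinuousOn (fun b => Φ b t) U)
    (hgrad : ∀ x ∈ K, c * ‖G x‖ ^ 2 ≤ fderiv ℝ f x (G x))
    (hfl : ∀ x ∈ K, l ≤ f x)
    (hLoj : ∀ x ∈ K, f x < l + δ → a * (f x - l) ^ θ ≤ ‖G x‖)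
    (b₀ : E) (hb₀ : b₀ ∈ U)
    (hconv : Filter.Tendsto (fun t => f (Φ b₀ t)) Filter.atTop (𝓝 l)) :
    ∃ U' ∈ 𝓝 b₀, U' ⊆ U ∧ ∃ L : E → E,
      (∀ b ∈ U', Filter.Tendsto (Φ b) Filter.atTop (𝓝 (L b))) ∧
      ContinuousAt L b₀ := by
  haveI : Nonempty E := ⟨0⟩
  have hθ' : (0:ℝ) < 1 - θ := by linarith
  set M : ℝ := ((1-θ)*c*a)⁻¹ with hMdef
  have hM : 0 < M := by positivity
  -- hypotheses specialized to a point b ∈ U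
  have hgs : ∀ b ∈ U, ∀ t ∈ Set.Ici (0:ℝ),
      c * ‖G (Φ b t)‖^2 ≤ fderiv ℝ f (Φ b t) (G (Φ b t)) :=
    fun b hb t ht => hgrad _ (hmem b hb t ht)
  have hlow : ∀ b ∈ U, ∀ t ∈ Set.Ici (0:ℝ), l ≤ f (Φ b t) :=
    fun b hb t ht => hfl _ (hmem b hb t ht)
  have hLojG : ∀ b ∈ U, ∀ t ∈ Set.Ici (0:ℝ), f (Φ b t) - l < δ →
      a * (f (Φ b t) - l)^θ ≤ ‖G (Φ b t)‖ :=
    fun b hb t ht h1 => hLoj _ (hmem b hb t ht) (by linarith)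
  have hconv0 : Filter.Tendsto (fun t => f (Φ b₀ t) - l) Filter.atTop (𝓝 0) := by
    simpa using hconv.sub_const l
  -- choose T₀
  obtain ⟨T₀, hT₀0, hT₀δ⟩ : ∃ T₀, 0 ≤ T₀ ∧ f (Φ b₀ T₀) - l < δ := by
    have h1 := hconv0.eventually_lt_const hδ
    have h2 := eventually_ge_atTop (0:ℝ)
    obtain ⟨T₀, h3, h4⟩ := (h2.and h1).exists
    exact ⟨T₀, h3, h4⟩
  set U' : Set E := U ∩ ((fun b => f (Φ b T₀) - l) ⁻¹' Set.Iio δ) with hU'def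
  have hU'sub : U' ⊆ U := Set.inter_subset_left
  have hU'nhds : U' ∈ 𝓝 b₀ := by
    have hcT₀ : ContinuousAt (fun b => Φ b T₀) b₀ :=
      (hcontb T₀ hT₀0).continuousAt (hU.mem_nhds hb₀)
    have hfc : ContinuousAt (fun b => f (Φ b T₀) - l) b₀ :=
      (hf.continuous.continuousAt.comp hcT₀).sub continuousAt_const
    exact Filter.inter_mem (hU.mem_nhds hb₀) (hfc.preimage_mem_nhds (Iio_mem_nhds hT₀δ))
  set L : E → E := fun b => limUnder Filter.atTop (Φ b) with hLdef
  -- main existence + estimate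
  have hex : ∀ b ∈ U, ∀ T, 0 ≤ T → f (Φ b T) - l < δ →
      Filter.Tendsto (Φ b) Filter.atTop (𝓝 (L b)) ∧
      ‖L b - Φ b T‖ ≤ M * (f (Φ b T) - l)^(1-θ) := by
    intro b hbU T hT0 hTδ
    set φ := Φ b with hφ
    have hd_b := hderiv b hbU
    have hgs_b := hgs b hbU
    have hlow_b := hlow b hbU
    have hLojG_b := hLojG b hbU
    have hanti := flow_antitone hf hc hd_b hgs_b (l := l)
    have hnonneg : ∀ r, 0 ≤ r → 0 ≤ f (φ r) - l := fun r hr => sub_nonneg.mpr (hlow_b r hr)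
    have hδr : ∀ r, T ≤ r → f (φ r) - l < δ := fun r hr =>
      lt_of_le_of_lt (hanti hT0 (hT0.trans hr) hr) hTδ
    have hkey : ∀ s t', T ≤ s → s ≤ t' → ‖φ t' - φ s‖ ≤
        M * ((f (φ s) - l)^(1-θ) - (f (φ t') - l)^(1-θ)) :=
      fun s t' hs hst => flow_estimate hG hf hc ha hθ₂ hd_b hgs_b hlow_b hLojG_b
        (hT0.trans hs) hst (hδr s hs)
    set g : ℝ → ℝ := fun t => (f (φ (max t T)) - l)^(1-θ) with hgdef
    have hganti : Antitone g := by
      intro t₁ t₂ h12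
      exact Real.rpow_le_rpow (hnonneg _ (hT0.trans (le_max_right _ _)))
        (hanti (hT0.trans (le_max_right t₁ T))
          (hT0.trans (le_max_right t₂ T)) (max_le_max h12 le_rfl)) hθ'.le
    have hgbdd : BddBelow (Set.range g) := by
      refine ⟨0, ?_⟩
      rintro x ⟨t, rfl⟩
      exact Real.rpow_nonneg (hnonneg _ (hT0.trans (le_max_right _ _))) _
    have hgconv := tendsto_atTop_ciInf hganti hgbdd
    set m' : ℝ := ⨅ t, g t with hm'
    have hm'le : ∀ t, m' ≤ g t := fun t => ciInf_le hgbdd t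
    have hgT : ∀ r, T ≤ r → g r = (f (φ r) - l)^(1-θ) := by
      intro r hr; simp only [hgdef, max_eq_left hr]
    have hcauchy : Cauchy (Filter.map φ Filter.atTop) := by
      rw [Metric.cauchy_iff]
      refine ⟨Filter.map_neBot, ?_⟩
      intro ε hε
      obtain ⟨N, hN1, hN2⟩ := ((eventually_ge_atTop T).and
        (hgconv.eventually_lt_const (by
          have : 0 < ε/(2*M) := by positivity
          linarith : m' < m' + ε/(2*M)))).exists
      refine ⟨φ '' Set.Ici N, Filter.image_mem_map (Ici_mem_atTop N), ?_⟩
      rintro x ⟨p, hp, rfl⟩ y ⟨q, hq, rfl⟩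
      have hbound : ∀ p q : ℝ, N ≤ p → N ≤ q → p ≤ q → dist (φ p) (φ q) < ε := by
        intro p q hp hq hpq
        have h1 := hkey p q (hN1.trans hp) hpq
        have h2 : (f (φ p) - l)^(1-θ) = g p := (hgT p (hN1.trans hp)).symm
        have h3 : (f (φ q) - l)^(1-θ) = g q := (hgT q (hN1.trans hq)).symm
        have h4 : g p ≤ g N := hganti hp
        have h5 : m' ≤ g q := hm'le q
        rw [dist_eq_norm, norm_sub_rev]
        calc ‖φ q - φ p‖ ≤ M * ((f (φ p) - l)^(1-θ) - (f (φ q) - l)^(1-θ)) := h1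
          _ = M * (g p - g q) := by rw [h2, h3]
          _ ≤ M * (ε/(2*M)) := by
              apply mul_le_mul_of_nonneg_left _ hM.le
              linarith
          _ = ε/2 := by field_simp
          _ < ε := by linarith
      rcases le_total p q with hpq | hqp
      · exact hbound p q hp hq hpq
      · rw [dist_comm]; exact hbound q p hq hp hqp
    obtain ⟨Lb, hLb⟩ := CompleteSpace.complete hcauchy
    have hLtend : Filter.Tendsto φ Filter.atTop (𝓝 Lb) := hLb
    have hLeq : L b = Lb := hLtend.limUnder_eq
    rw [hLeq]
    refine ⟨hLtend, ?_⟩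
    have h1 : ∀ t, T ≤ t → ‖φ t - φ T‖ ≤ M * (f (φ T) - l)^(1-θ) := by
      intro t ht
      refine (hkey T t le_rfl ht).trans ?_
      have h2 : 0 ≤ (f (φ t) - l)^(1-θ) := Real.rpow_nonneg (hnonneg t (hT0.trans ht)) _
      apply mul_le_mul_of_nonneg_left _ hM.le
      linarith
    have h2 : Filter.Tendsto (fun t => ‖φ t - φ T‖) Filter.atTop (𝓝 ‖Lb - φ T‖) :=
      ((hLtend.sub_const (φ T)).norm)
    exact le_of_tendsto h2 (by filter_upwards [eventually_ge_atTop T] with t ht using h1 t ht)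
  refine ⟨U', hU'nhds, hU'sub, L, fun b hb => (hex b hb.1 T₀ hT₀0 hb.2).1, ?_⟩
  -- continuity at b₀
  have hb₀U' : b₀ ∈ U' := ⟨hb₀, hT₀δ⟩
  rw [ContinuousAt, Metric.tendsto_nhds]
  intro ε hε
  -- choose T
  have hrpowcont : ContinuousAt (fun x : ℝ => M * x^(1-θ)) 0 :=
    continuousAt_const.mul (Real.continuousAt_rpow_const 0 _ (Or.inr hθ'.le))
  have htend : Filter.Tendsto (fun t => M * (f (Φ b₀ t) - l)^(1-θ)) Filter.atTop (𝓝 0) := by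
    have := hrpowcont.tendsto.comp hconv0
    simpa [Function.comp_def, Real.zero_rpow (ne_of_gt hθ')] using this
  obtain ⟨T, hTT₀, hT0, hTδ2, hTε⟩ : ∃ T, T₀ ≤ T ∧ 0 ≤ T ∧ f (Φ b₀ T) - l < δ ∧
      M * (f (Φ b₀ T) - l)^(1-θ) < ε/4 := by
    have e1 := eventually_ge_atTop T₀
    have e2 := eventually_ge_atTop (0:ℝ)
    have e3 := hconv0.eventually_lt_const hδ
    have e4 := htend.eventually_lt_const (by positivity : (0:ℝ) < ε/4)
    obtain ⟨T, ⟨⟨h1, h2⟩, h3⟩, h4⟩ := (((e1.and e2).and e3).and e4).exists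
    exact ⟨T, h1, h2, h3, h4⟩
  have hcT : ContinuousAt (fun b => Φ b T) b₀ :=
    (hcontb T hT0).continuousAt (hU.mem_nhds hb₀)
  have hfcT : ContinuousAt (fun b => f (Φ b T) - l) b₀ :=
    (hf.continuous.continuousAt.comp hcT).sub continuousAt_const
  have hψcont : ContinuousAt (fun b => M * (f (Φ b T) - l)^(1-θ)) b₀ :=
    continuousAt_const.mul ((Real.continuousAt_rpow_const _ _ (Or.inr hθ'.le)).comp hfcT)
  have evb1 : ∀ᶠ b in 𝓝 b₀, b ∈ U' := hU'nhds
  have evb2 : ∀ᶠ b in 𝓝 b₀, dist (Φ b T) (Φ b₀ T) < ε/4 :=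
    (Metric.tendsto_nhds.mp hcT) (ε/4) (by positivity)
  have evb3 : ∀ᶠ b in 𝓝 b₀, f (Φ b T) - l < δ :=
    hfcT.preimage_mem_nhds (Iio_mem_nhds hTδ2)
  have evb4 : ∀ᶠ b in 𝓝 b₀, M * (f (Φ b T) - l)^(1-θ) < ε/4 :=
    hψcont.preimage_mem_nhds (Iio_mem_nhds hTε)
  filter_upwards [evb1, evb2, evb3, evb4] with b hb1 hb2 hb3 hb4
  have e1 := (hex b hb1.1 T hT0 hb3).2
  have e2 := (hex b₀ hb₀ T hT0 hTδ2).2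
  have d1 : dist (L b) (Φ b T) < ε/4 := by rw [dist_eq_norm]; linarith
  have d2 : dist (Φ b₀ T) (L b₀) < ε/4 := by
    rw [dist_comm, dist_eq_norm]; linarith
  calc dist (L b) (L b₀) ≤ dist (L b) (Φ b T) + dist (Φ b T) (Φ b₀ T)
        + dist (Φ b₀ T) (L b₀) := dist_triangle4 _ _ _ _
    _ < ε/4 + ε/4 + ε/4 := by linarith
    _ < ε := by linarith
end

section
/- Let C > 0, ε ∈ (0, 1), and 0 ≤ s < t be reals. Let ρ : ℝ → ℝ be continuous on [s, t] with ρ(s) = 0 and ρ(r) ≥ 0 for all r ∈ [s, t]. Assume that at every r ∈ (s, t] with ρ(r) > 0, ρ is differentiable at r with derivative at most C·r^{−ε}. Then for every r ∈ [s, t], ρ(r) ≤ (C/(1−ε))·(r^{1−ε} − s^{1−ε}). -/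
theorem rho_le_of_deriv_bound
    (C ε : ℝ) (hC : 0 < C) (hε : ε ∈ Set.Ioo (0:ℝ) 1)
    (s t : ℝ) (hs : 0 ≤ s) (hst : s < t)
    (ρ : ℝ → ℝ) (hcont : ContinuousOn ρ (Set.Icc s t)) (hρs : ρ s = 0)
    (hnonneg : ∀ r ∈ Set.Icc s t, 0 ≤ ρ r)
    (hderiv : ∀ r ∈ Set.Ioc s t, 0 < ρ r →
      DifferentiableAt ℝ ρ r ∧ deriv ρ r ≤ C * r ^ (-ε)) :
    ∀ r ∈ Set.Icc s t, ρ r ≤ (C / (1 - ε)) * (r ^ (1 - ε) - s ^ (1 - ε)) := by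
  obtain ⟨hε0, hε1⟩ := hε
  have h1ε : (0:ℝ) < 1 - ε := by linarith
  set g : ℝ → ℝ := fun r => (C / (1 - ε)) * (r ^ (1 - ε) - s ^ (1 - ε)) with hgdef
  have hgcont : Continuous g := by
    apply Continuous.mul continuous_const
    apply Continuous.sub _ continuous_const
    exact continuous_iff_continuousAt.2 fun x =>
      Real.continuousAt_rpow_const x (1 - ε) (Or.inr h1ε.le)
  have hgderiv : ∀ x : ℝ, 0 < x → HasDerivAt g (C * x ^ (-ε)) x := by
    intro x hx
    have h := (Real.hasDerivAt_rpow_const (p := 1 - ε) (Or.inl hx.ne')).sub_const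
      (s ^ (1 - ε))
    have h2 := h.const_mul (C / (1 - ε))
    refine h2.congr_deriv ?_
    have : (1 - ε) - 1 = -ε := by ring
    rw [this]
    field_simp
  have hgnonneg : ∀ x, s ≤ x → 0 ≤ g x := by
    intro x hx
    have : s ^ (1 - ε) ≤ x ^ (1 - ε) := Real.rpow_le_rpow hs hx h1ε.le
    have := div_pos hC h1ε
    simp only [hgdef]
    nlinarith
  intro r₀ hr₀
  by_contra hcon
  push_neg at hcon
  set h : ℝ → ℝ := fun r => ρ r - g r with hhdef
  have hgs : g s = 0 := by simp [hgdef]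
  have hhr₀ : 0 < h r₀ := by simp only [hhdef, hgdef]; linarith
  have hhs : h s = 0 := by simp [hhdef, hρs, hgs]
  have hsr₀ : s < r₀ := by
    rcases eq_or_lt_of_le hr₀.1 with h' | h'
    · exfalso; rw [← h'] at hhr₀; linarith
    · exact h'
  set S := {r | r ∈ Set.Icc s r₀ ∧ h r ≤ 0} with hSdef
  have hhcont : ContinuousOn h (Set.Icc s t) := hcont.sub hgcont.continuousOn
  have hsub : Set.Icc s r₀ ⊆ Set.Icc s t := Set.Icc_subset_Icc le_rfl hr₀.2
  have hSclosed : IsClosed S := by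
    have : S = Set.Icc s r₀ ∩ h ⁻¹' Set.Iic 0 := rfl
    rw [this]
    exact (hhcont.mono hsub).preimage_isClosed_of_isClosed isClosed_Icc isClosed_Iic
  have hSne : S.Nonempty := ⟨s, ⟨le_rfl, hsr₀.le⟩, hhs.le⟩
  have hSbdd : BddAbove S := ⟨r₀, fun x hx => hx.1.2⟩
  set u := sSup S with hudef
  have huS : u ∈ S := hSclosed.csSup_mem hSne hSbdd
  have hsu : s ≤ u := huS.1.1
  have hur₀ : u < r₀ := by
    rcases eq_or_lt_of_le huS.1.2 with h' | h'
    · exfalso; rw [h'] at huS; linarith [huS.2]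
    · exact h'
  have hpos : ∀ x ∈ Set.Ioc u r₀, 0 < h x := by
    intro x hx
    by_contra hx'
    push_neg at hx'
    have : x ∈ S := ⟨⟨hsu.trans hx.1.le, hx.2⟩, hx'⟩
    exact absurd (le_csSup hSbdd this) (not_le.2 hx.1)
  have hanti : AntitoneOn h (Set.Icc u r₀) := by
    apply antitoneOn_of_deriv_nonpos (convex_Icc u r₀)
    · exact hhcont.mono (Set.Icc_subset_Icc hsu (hr₀.2))
    · rw [interior_Icc]
      intro x hx
      have hx0 : 0 < x := lt_of_le_of_lt (hs.trans hsu) hx.1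
      have hxIoc : x ∈ Set.Ioc s t := ⟨lt_of_le_of_lt hsu hx.1, hx.2.le.trans hr₀.2⟩
      have hρx : 0 < ρ x := by
        have := hpos x ⟨hx.1, hx.2.le⟩
        have := hgnonneg x (hsu.trans hx.1.le)
        simp only [hhdef] at *
        linarith
      exact ((hderiv x hxIoc hρx).1.sub (hgderiv x hx0).differentiableAt).differentiableWithinAt
    · rw [interior_Icc]
      intro x hx
      have hx0 : 0 < x := lt_of_le_of_lt (hs.trans hsu) hx.1
      have hxIoc : x ∈ Set.Ioc s t := ⟨lt_of_le_of_lt hsu hx.1, hx.2.le.trans hr₀.2⟩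
      have hρx : 0 < ρ x := by
        have := hpos x ⟨hx.1, hx.2.le⟩
        have := hgnonneg x (hsu.trans hx.1.le)
        simp only [hhdef] at *
        linarith
      obtain ⟨hd, hdb⟩ := hderiv x hxIoc hρx
      have : deriv h x = deriv ρ x - C * x ^ (-ε) := by
        simp only [hhdef]
        rw [deriv_fun_sub hd (hgderiv x hx0).differentiableAt, (hgderiv x hx0).deriv]
      rw [this]
      linarith
  have := hanti ⟨le_rfl, hur₀.le⟩ ⟨hur₀.le, le_rfl⟩ hur₀.le
  linarith [huS.2]
end
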